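/- arXiv:1803.02347 — 12 statements merged into one kernel-verified Lean document; each statement's English description precedes it below -/
import Mathlib

section
/- For every ε > 0 there exists a natural number k such that for every integer n > k and every point x ∈ K for which the iterates T^i x are defined for all i = 1,…,n and which lies in K₀, one has ρ(T^i x, T^{i+1} x) ≤ ε for all integers i with k ≤ i < n. -/
/-- For every `ε > 0` there is `k` such that for every `n > k` and every `x ∈ K₀`
whose iterates `T^i x` are defined (lie in `K`) for `i < n`, one has
`ρ(T^i x, T^{i+1} x) ≤ ε` for all `k ≤ i < n`. -/
theorem stmt_1 {X : Type*} [MetricSpace X] [CompleteSpace X]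
    (K : Set X) (hKne : K.Nonempty) (hKcl : IsClosed K)
    (T : X → X) (φ : ℝ → ℝ)
    (hφmono : AntitoneOn φ (Set.Ici 0))
    (hφrange : ∀ t ≥ (0:ℝ), φ t ∈ Set.Icc (0:ℝ) 1)
    (hφlt : ∀ t > (0:ℝ), φ t < 1)
    (hT : ∀ x ∈ K, ∀ y ∈ K, dist (T x) (T y) ≤ φ (dist x y) * dist x y)
    (K₀ : Set X) (hK₀K : K₀ ⊆ K) (hK₀ne : K₀.Nonempty)
    (hK₀bdd : Bornology.IsBounded K₀) :
    ∀ ε > (0:ℝ), ∃ k : ℕ, ∀ n : ℕ, n > k →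
      ∀ x ∈ K₀, (∀ i < n, T^[i] x ∈ K) →
        ∀ i : ℕ, k ≤ i → i < n → dist (T^[i] x) (T^[i+1] x) ≤ ε := by
  intro ε hε
  obtain ⟨x₀, hx₀⟩ := hK₀ne
  obtain ⟨M, hM⟩ := Metric.isBounded_iff.mp hK₀bdd
  set D : ℝ := M + dist x₀ (T x₀) + M with hD
  set q : ℝ := φ ε with hq
  have hq0 : 0 ≤ q := (hφrange ε hε.le).1
  have hq1 : q < 1 := hφlt ε hε
  set D' : ℝ := max D 1 with hD'
  have hD'pos : 0 < D' := lt_of_lt_of_le one_pos (le_max_right _ _)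
  obtain ⟨k, hk⟩ := exists_pow_lt_of_lt_one (div_pos hε hD'pos) hq1
  have hkD : q ^ k * D ≤ ε := by
    have h1 : q ^ k * D' < ε := (lt_div_iff₀ hD'pos).mp hk
    have h2 : q ^ k * D ≤ q ^ k * D' :=
      mul_le_mul_of_nonneg_left (le_max_left _ _) (pow_nonneg hq0 k)
    linarith
  refine ⟨k, ?_⟩
  intro n hn x hx hK' i hki hin
  set d : ℕ → ℝ := fun j => dist (T^[j] x) (T^[j+1] x) with hd
  have hd0 : ∀ j, 0 ≤ d j := fun j => dist_nonneg
  have hφd1 : ∀ j, φ (d j) ≤ 1 := fun j => (hφrange _ (hd0 j)).2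
  have hstep : ∀ j, j + 1 < n → d (j+1) ≤ φ (d j) * d j := by
    intro j hj
    have h1 : T^[j] x ∈ K := hK' j (by omega)
    have h2 : T^[j+1] x ∈ K := hK' (j+1) hj
    have e1 : T^[j+1] x = T (T^[j] x) := Function.iterate_succ_apply' T j x
    have e2 : T^[j+1+1] x = T (T^[j+1] x) := Function.iterate_succ_apply' T (j+1) x
    have h := hT _ h1 _ h2
    rw [e1] at h
    simp only [hd]
    rw [e2, e1]
    exact h
  have hdec : ∀ j, j + 1 < n → d (j+1) ≤ d j := by
    intro j hj
    calc d (j+1) ≤ φ (d j) * d j := hstep j hj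
    _ ≤ 1 * d j := mul_le_mul_of_nonneg_right (hφd1 j) (hd0 j)
    _ = d j := one_mul _
  -- uniform bound on d 0
  have hd0D : d 0 ≤ D := by
    have hx0K : x₀ ∈ K := hK₀K hx₀
    have hxK : x ∈ K := hK₀K hx
    have hTx : dist (T x₀) (T x) ≤ dist x₀ x := by
      calc dist (T x₀) (T x) ≤ φ (dist x₀ x) * dist x₀ x := hT _ hx0K _ hxK
      _ ≤ 1 * dist x₀ x :=
        mul_le_mul_of_nonneg_right ((hφrange _ dist_nonneg).2) dist_nonneg
      _ = dist x₀ x := one_mul _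
    have hxx₀ : dist x x₀ ≤ M := hM hx hx₀
    have hx₀x : dist x₀ x ≤ M := hM hx₀ hx
    calc d 0 = dist x (T x) := by simp [hd]
    _ ≤ dist x x₀ + dist x₀ (T x₀) + dist (T x₀) (T x) := dist_triangle4 _ _ _ _
    _ ≤ M + dist x₀ (T x₀) + M := by linarith
  have hbound : ∀ j, j < n → d j ≤ max ε (q ^ j * D) := by
    intro j
    induction j with
    | zero => intro _; simpa using le_max_of_le_right (by simpa using hd0D)
    | succ j ih =>
      intro hj
      have hjn : j < n := by omega
      have hIH := ih hjn
      by_cases hcase : d j ≤ ε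
      · exact le_max_of_le_left ((hdec j hj).trans hcase)
      · push_neg at hcase
        have hφq : φ (d j) ≤ q :=
          hφmono (Set.mem_Ici.mpr hε.le) (Set.mem_Ici.mpr (hd0 j)) hcase.le
        have h1 : d (j+1) ≤ q * d j := by
          calc d (j+1) ≤ φ (d j) * d j := hstep j hj
          _ ≤ q * d j := mul_le_mul_of_nonneg_right hφq (hd0 j)
        have h2 : q * d j ≤ q * max ε (q ^ j * D) :=
          mul_le_mul_of_nonneg_left hIH hq0
        have h3 : q * max ε (q ^ j * D) ≤ max ε (q ^ (j+1) * D) := by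
          rw [mul_max_of_nonneg _ _ hq0]
          apply max_le
          · exact le_max_of_le_left (by nlinarith)
          · exact le_max_of_le_right (by ring_nf; nlinarith [pow_nonneg hq0 j])
        linarith
  have hdk : d k ≤ ε := by
    have := hbound k (by omega)
    exact this.trans (max_le le_rfl hkD)
  -- propagate from k to i
  have key : ∀ m, k ≤ m → m < n → d m ≤ ε := by
    intro m hm
    induction m, hm using Nat.le_induction with
    | base => intro _; exact hdk
    | succ m hm ih =>
      intro hmn
      exact (hdec m hmn).trans (ih (by omega))
  exact key i hki hin
end

section
/- For each ε > 0, any natural number k > ((1−φ(ε))ε)^{-1}·4c₀ satisfies: for all integers n₁,n₂ ≥ k (with the iterates T^k x_{n₁}, T^k x_{n₂} defined), ρ(T^k x_{n₁}, T^k x_{n₂}) ≤ ε. -/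
/-- For each `ε > 0`, any `k > 4c₀/((1-φ(ε))ε)` satisfies:
for all `n₁, n₂ ≥ k`, `ρ(T^k x_{n₁}, T^k x_{n₂}) ≤ ε`. -/
theorem stmt_3 {X : Type*} [MetricSpace X] [CompleteSpace X]
    (K : Set X) (hKne : K.Nonempty) (hKcl : IsClosed K)
    (T : X → X) (φ : ℝ → ℝ)
    (hφmono : AntitoneOn φ (Set.Ici 0))
    (hφrange : ∀ t ≥ (0:ℝ), φ t ∈ Set.Icc (0:ℝ) 1)
    (hφlt : ∀ t > (0:ℝ), φ t < 1)
    (hT : ∀ x ∈ K, ∀ y ∈ K, dist (T x) (T y) ≤ φ (dist x y) * dist x y)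
    (K₀ : Set X) (hK₀K : K₀ ⊆ K) (hK₀ne : K₀.Nonempty)
    (θ : X) (hθ : θ ∈ K) (c₀ : ℝ) (hc₀ : 0 < c₀)
    (hbound : ∀ z ∈ K₀, dist θ z ≤ c₀)
    (x : ℕ → X) (hx : ∀ n, x n ∈ K₀) (hxit : ∀ n, ∀ i < n, T^[i] (x n) ∈ K) :
    ∀ ε > (0:ℝ), ∀ k : ℕ, (k : ℝ) > ((1 - φ ε) * ε)⁻¹ * (4 * c₀) →
      ∀ n₁ n₂ : ℕ, k ≤ n₁ → k ≤ n₂ →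
        dist (T^[k] (x n₁)) (T^[k] (x n₂)) ≤ ε := by
  intro ε hε k hk n₁ n₂ hn₁ hn₂
  by_contra hcon
  push_neg at hcon
  set d : ℕ → ℝ := fun i => dist (T^[i] (x n₁)) (T^[i] (x n₂)) with hd
  set δ : ℝ := (1 - φ ε) * ε with hδdef
  have hφε1 : φ ε < 1 := hφlt ε hε
  have hδ : 0 < δ := mul_pos (by linarith) hε
  -- contractive step
  have hstep : ∀ i < k, d (i + 1) ≤ φ (d i) * d i := by
    intro i hik
    have h1 : T^[i] (x n₁) ∈ K := hxit n₁ i (lt_of_lt_of_le hik hn₁)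
    have h2 : T^[i] (x n₂) ∈ K := hxit n₂ i (lt_of_lt_of_le hik hn₂)
    have := hT _ h1 _ h2
    simpa [hd, Function.iterate_succ_apply'] using this
  have hφle1 : ∀ i, φ (d i) ≤ 1 := fun i => (hφrange _ dist_nonneg).2
  have hdec : ∀ i < k, d (i + 1) ≤ d i := by
    intro i hik
    have := hstep i hik
    nlinarith [dist_nonneg (x := T^[i] (x n₁)) (y := T^[i] (x n₂)), hφle1 i]
  -- one-step decrease by δ when above ε
  have hstep' : ∀ i < k, ε < d i → d (i + 1) + δ ≤ d i := by
    intro i hik hεd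
    have hφ : φ (d i) ≤ φ ε := hφmono (Set.mem_Ici.mpr hε.le)
      (Set.mem_Ici.mpr (le_trans hε.le hεd.le)) hεd.le
    have h := hstep i hik
    have hd0 : (0:ℝ) ≤ d i := dist_nonneg
    nlinarith [hφrange ε hε.le]
  have haux : ∀ j ≤ k, ε < d j → d j + j * δ ≤ d 0 := by
    intro j
    induction j with
    | zero => intro _ _; simp
    | succ j ih =>
      intro hjk hεd
      have hjk' : j < k := hjk
      have hεdj : ε < d j := lt_of_lt_of_le hεd (hdec j hjk')
      have h1 := hstep' j hjk' hεdj
      have h2 := ih (le_of_lt hjk') hεdj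
      push_cast
      nlinarith
  have hfin := haux k le_rfl hcon
  have hd02 : d 0 ≤ 2 * c₀ := by
    have h1 := hbound _ (hx n₁)
    have h2 := hbound _ (hx n₂)
    have := dist_triangle_left (x n₁) (x n₂) θ
    simpa [hd] using le_trans this (by linarith)
  have hkδ : 4 * c₀ < (k : ℝ) * δ := by
    have h := mul_lt_mul_of_pos_left hk hδ
    have h2 : δ * δ⁻¹ = 1 := mul_inv_cancel₀ hδ.ne'
    nlinarith
  nlinarith
end

section
/- The mapping T has a unique fixed point x̄ in K, and moreover the sequences (T^{n-2} x_n) and (T^{n-1} x_n) both converge to x̄. -/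
open Filter Topology

/-- The mapping `T` has a unique fixed point `x̄ ∈ K`, and the sequences
`T^{n-2} x_n` and `T^{n-1} x_n` converge to `x̄`. -/
theorem stmt_4 {X : Type*} [MetricSpace X] [CompleteSpace X]
    (K : Set X) (hKne : K.Nonempty) (hKcl : IsClosed K)
    (T : X → X) (φ : ℝ → ℝ)
    (hφmono : AntitoneOn φ (Set.Ici 0))
    (hφrange : ∀ t ≥ (0:ℝ), φ t ∈ Set.Icc (0:ℝ) 1)
    (hφlt : ∀ t > (0:ℝ), φ t < 1)
    (hT : ∀ x ∈ K, ∀ y ∈ K, dist (T x) (T y) ≤ φ (dist x y) * dist x y)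
    (K₀ : Set X) (hK₀K : K₀ ⊆ K) (hK₀ne : K₀.Nonempty)
    (hK₀bdd : Bornology.IsBounded K₀)
    (x : ℕ → X) (hx : ∀ n, x n ∈ K₀) (hxit : ∀ n, ∀ i < n, T^[i] (x n) ∈ K) :
    ∃ xbar ∈ K, T xbar = xbar ∧ (∀ y ∈ K, T y = y → y = xbar) ∧
      Tendsto (fun n => T^[n-2] (x n)) atTop (𝓝 xbar) ∧
      Tendsto (fun n => T^[n-1] (x n)) atTop (𝓝 xbar) := by
  classical
  obtain ⟨D, hD⟩ := Metric.isBounded_iff.mp hK₀bdd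
  have hxK : ∀ n, x n ∈ K := fun n => hK₀K (hx n)
  set B : ℝ := D + D + dist (x 0) (T (x 0)) with hBdef
  have hTle : ∀ u ∈ K, ∀ v ∈ K, dist (T u) (T v) ≤ dist u v := by
    intro u hu v hv
    calc dist (T u) (T v) ≤ φ (dist u v) * dist u v := hT u hu v hv
    _ ≤ 1 * dist u v :=
        mul_le_mul_of_nonneg_right (hφrange _ dist_nonneg).2 dist_nonneg
    _ = dist u v := one_mul _
  have hD0 : 0 ≤ D := le_trans dist_nonneg (hD (hx 0) (hx 0))
  have hB0 : 0 ≤ B := by positivity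
  have hB : ∀ n, dist (x n) (T (x n)) ≤ B := by
    intro n
    have h1 : dist (x n) (x 0) ≤ D := hD (hx n) (hx 0)
    have h2 : dist (T (x 0)) (T (x n)) ≤ dist (x 0) (x n) := hTle _ (hxK 0) _ (hxK n)
    have h3 : dist (x 0) (x n) ≤ D := hD (hx 0) (hx n)
    have h4 := dist_triangle4 (x n) (x 0) (T (x 0)) (T (x n))
    rw [hBdef]; linarith
  -- Key iteration lemma
  have key : ∀ ε > (0:ℝ), ∀ N : ℕ, ∀ u v : X, (∀ i < N, T^[i] u ∈ K) →
      (∀ i < N, T^[i] v ∈ K) → dist u v ≤ B →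
      dist (T^[N] u) (T^[N] v) ≤ max ε (φ ε ^ N * B) := by
    intro ε hε N
    induction N with
    | zero =>
      intro u v _ _ huv
      simp only [Function.iterate_zero, id_eq, pow_zero, one_mul]
      exact le_trans huv (le_max_right _ _)
    | succ N ih =>
      intro u v hu hv huv
      have huN : T^[N] u ∈ K := hu N (Nat.lt_succ_self N)
      have hvN : T^[N] v ∈ K := hv N (Nat.lt_succ_self N)
      have hd : dist (T^[N] u) (T^[N] v) ≤ max ε (φ ε ^ N * B) :=
        ih u v (fun i hi => hu i (hi.trans (Nat.lt_succ_self N)))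
          (fun i hi => hv i (hi.trans (Nat.lt_succ_self N))) huv
      set d := dist (T^[N] u) (T^[N] v) with hddef
      have hstep : dist (T^[N+1] u) (T^[N+1] v) ≤ φ d * d := by
        rw [Function.iterate_succ_apply' T N u, Function.iterate_succ_apply' T N v]
        exact hT _ huN _ hvN
      have hd0 : 0 ≤ d := dist_nonneg
      have hφε0 : 0 ≤ φ ε := (hφrange ε hε.le).1
      have hφε1 : φ ε ≤ 1 := (hφrange ε hε.le).2
      by_cases hc : d ≤ ε
      · have hφd1 : φ d ≤ 1 := (hφrange d hd0).2
        have : φ d * d ≤ d := by nlinarith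
        exact le_trans hstep (le_trans this (le_trans hc (le_max_left _ _)))
      · push_neg at hc
        have hφd : φ d ≤ φ ε := hφmono (Set.mem_Ici.mpr hε.le) (Set.mem_Ici.mpr hd0) hc.le
        calc dist (T^[N+1] u) (T^[N+1] v) ≤ φ d * d := hstep
        _ ≤ φ ε * d := mul_le_mul_of_nonneg_right hφd hd0
        _ ≤ φ ε * max ε (φ ε ^ N * B) := mul_le_mul_of_nonneg_left hd hφε0
        _ ≤ max ε (φ ε ^ (N+1) * B) := by
            rw [mul_max_of_nonneg _ _ hφε0]
            apply max_le_max
            · nlinarith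
            · exact le_of_eq (by ring)
  -- δ-lemma: for k ≥ 1, dist (T^[n-k] xₙ) (T (T^[n-k] xₙ)) is eventually small
  have hδ : ∀ k : ℕ, 1 ≤ k → ∀ ε > (0:ℝ), ∃ M : ℕ, ∀ n ≥ M,
      dist (T^[n-k] (x n)) (T (T^[n-k] (x n))) ≤ ε := by
    intro k hk ε hε
    have hφε0 : 0 ≤ φ ε := (hφrange ε hε.le).1
    have hφε1 : φ ε < 1 := hφlt ε hε
    have htend : Tendsto (fun m : ℕ => φ ε ^ m * B) atTop (𝓝 0) := by
      simpa using (tendsto_pow_atTop_nhds_zero_of_lt_one hφε0 hφε1).mul_const B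
    obtain ⟨M₀, hM₀⟩ := (eventually_atTop).mp (htend.eventually (gt_mem_nhds hε))
    refine ⟨M₀ + k, fun n hn => ?_⟩
    have hnk : k ≤ n := le_trans (Nat.le_add_left k M₀) hn
    have e : T (T^[n-k] (x n)) = T^[n-k] (T (x n)) := by
      rw [← Function.iterate_succ_apply' T (n-k) (x n), Function.iterate_succ_apply]
    rw [e]
    have h1 : ∀ i < n - k, T^[i] (x n) ∈ K := fun i hi => hxit n i (by omega)
    have h2 : ∀ i < n - k, T^[i] (T (x n)) ∈ K := by
      intro i hi
      rw [← Function.iterate_succ_apply]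
      exact hxit n (i+1) (by omega)
    have := key ε hε (n-k) (x n) (T (x n)) h1 h2 (hB n)
    refine le_trans this (max_le le_rfl ?_)
    exact (hM₀ (n-k) (by omega)).le
  -- the sequence zₙ = T^[n-1] xₙ
  set z : ℕ → X := fun n => T^[n-1] (x n) with hzdef
  have hsK : ∀ k, 1 ≤ k → ∀ n, T^[n-k] (x n) ∈ K := by
    intro k hk n
    rcases Nat.eq_zero_or_pos n with h | h
    · subst h; simpa using hxK 0
    · exact hxit n (n-k) (by omega)
  have hzK : ∀ n, z n ∈ K := hsK 1 le_rfl
  have hzC : CauchySeq z := by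
    rw [Metric.cauchySeq_iff]
    intro ε hε
    set ε' := ε / 2 with hε'def
    have hε'0 : 0 < ε' := by positivity
    have hφε' : φ ε' < 1 := hφlt ε' hε'0
    have hφε'0 : 0 ≤ φ ε' := (hφrange ε' hε'0.le).1
    set δ := ε' * (1 - φ ε') / 2 with hδdef
    have hδ0 : 0 < δ := by
      apply div_pos (mul_pos hε'0 (by linarith)) (by norm_num)
    obtain ⟨M, hM⟩ := hδ 1 le_rfl δ hδ0
    refine ⟨M, fun m hm n hn => ?_⟩
    have h1 : dist (z m) (T (z m)) ≤ δ := hM m hm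
    have h2 : dist (z n) (T (z n)) ≤ δ := hM n hn
    set d := dist (z m) (z n) with hddef
    have hd0 : 0 ≤ d := dist_nonneg
    have htri : d ≤ dist (z m) (T (z m)) + dist (T (z m)) (T (z n)) + dist (T (z n)) (z n) :=
      dist_triangle4 _ _ _ _
    have hTzz : dist (T (z m)) (T (z n)) ≤ φ d * d := hT _ (hzK m) _ (hzK n)
    have h2' : dist (T (z n)) (z n) ≤ δ := by rw [dist_comm]; exact h2
    by_cases hc : d ≤ ε'
    · rw [hε'def] at hc; linarith
    · push_neg at hc
      have hφd : φ d ≤ φ ε' := hφmono (Set.mem_Ici.mpr hε'0.le) (Set.mem_Ici.mpr hd0) hc.le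
      have hφdd : φ d * d ≤ φ ε' * d := mul_le_mul_of_nonneg_right hφd hd0
      have hkey : d * (1 - φ ε') ≤ ε' * (1 - φ ε') / 2 * 2 := by nlinarith
      have : d ≤ ε' := by nlinarith
      rw [hε'def] at this; linarith
  obtain ⟨xbar, hxbar⟩ := cauchySeq_tendsto_of_complete hzC
  have hxbarK : xbar ∈ K := hKcl.mem_of_tendsto hxbar (Eventually.of_forall hzK)
  -- fixed point
  have hTxbar : T xbar = xbar := by
    have hdle : ∀ ε > (0:ℝ), dist (T xbar) xbar ≤ ε := by
      intro ε hε
      obtain ⟨M₁, hM₁⟩ := hδ 1 le_rfl (ε/3) (by positivity)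
      obtain ⟨M₂, hM₂⟩ := (Metric.tendsto_atTop.mp hxbar) (ε/3) (by positivity)
      set n := max M₁ M₂
      have h1 : dist (z n) (T (z n)) ≤ ε/3 := hM₁ n (le_max_left _ _)
      have h2 : dist (z n) xbar < ε/3 := hM₂ n (le_max_right _ _)
      have h3 : dist (T xbar) (T (z n)) ≤ dist xbar (z n) := hTle _ hxbarK _ (hzK n)
      have h4 := dist_triangle4 (T xbar) (T (z n)) (z n) xbar
      have h5 : dist (T (z n)) (z n) = dist (z n) (T (z n)) := dist_comm _ _
      have h6 : dist xbar (z n) = dist (z n) xbar := dist_comm _ _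
      linarith
    have : dist (T xbar) xbar ≤ 0 := le_of_forall_pos_le_add (by
      intro ε hε; simpa using hdle ε hε)
    exact eq_of_dist_eq_zero (le_antisymm this dist_nonneg)
  -- uniqueness
  have huniq : ∀ y ∈ K, T y = y → y = xbar := by
    intro y hy hTy
    by_contra hne
    have hd : 0 < dist y xbar := dist_pos.mpr hne
    have h1 : dist y xbar ≤ φ (dist y xbar) * dist y xbar := by
      calc dist y xbar = dist (T y) (T xbar) := by rw [hTy, hTxbar]
      _ ≤ φ (dist y xbar) * dist y xbar := hT _ hy _ hxbarK
    have h2 : φ (dist y xbar) < 1 := hφlt _ hd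
    nlinarith
  -- convergence for general shift k ≥ 1
  have conv : ∀ k : ℕ, 1 ≤ k → Tendsto (fun n => T^[n-k] (x n)) atTop (𝓝 xbar) := by
    intro k hk
    rw [Metric.tendsto_atTop]
    intro ε hε
    set ε' := ε / 2 with hε'def
    have hε'0 : 0 < ε' := by positivity
    have hφε' : φ ε' < 1 := hφlt ε' hε'0
    have hφε'0 : 0 ≤ φ ε' := (hφrange ε' hε'0.le).1
    set δ := ε' * (1 - φ ε') / 2 with hδdef
    have hδ0 : 0 < δ := by
      apply div_pos (mul_pos hε'0 (by linarith)) (by norm_num)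
    obtain ⟨M, hM⟩ := hδ k hk δ hδ0
    refine ⟨M, fun n hn => ?_⟩
    set s := T^[n-k] (x n) with hsdef
    have h1 : dist s (T s) ≤ δ := hM n hn
    set d := dist s xbar with hd2def
    have hd0 : 0 ≤ d := dist_nonneg
    have htri : d ≤ dist s (T s) + dist (T s) xbar := dist_triangle _ _ _
    have hTs : dist (T s) xbar ≤ φ d * d := by
      calc dist (T s) xbar = dist (T s) (T xbar) := by rw [hTxbar]
      _ ≤ φ d * d := hT _ (hsK k hk n) _ hxbarK
    by_cases hc : d ≤ ε'
    · rw [hε'def] at hc; show dist s xbar < ε; rw [← hd2def]; linarith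
    · push_neg at hc
      have hφd : φ d ≤ φ ε' := hφmono (Set.mem_Ici.mpr hε'0.le) (Set.mem_Ici.mpr hd0) hc.le
      have hφdd : φ d * d ≤ φ ε' * d := mul_le_mul_of_nonneg_right hφd hd0
      have : d ≤ ε' := by nlinarith
      show dist s xbar < ε
      rw [← hd2def]; rw [hε'def] at this; linarith
  exact ⟨xbar, hxbarK, hTxbar, huniq, conv 2 (by norm_num), conv 1 le_rfl⟩
end

section
/- For each M, ε > 0 there exist δ > 0 and a natural number k such that for each integer n ≥ k and each sequence x₀,…,x_n in K satisfying ρ(x₀, x̄) ≤ M and ρ(x_{i+1}, T x_i) ≤ δ for i = 0,…,n−1, one has ρ(x_i, x̄) ≤ ε for all i = k,…,n. -/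
/-- Theorem 1(B): stability of inexact orbits. -/
theorem stmt_6 {X : Type*} [MetricSpace X] [CompleteSpace X]
    (K : Set X) (hKne : K.Nonempty) (hKcl : IsClosed K)
    (T : X → X) (φ : ℝ → ℝ)
    (hφmono : AntitoneOn φ (Set.Ici 0))
    (hφrange : ∀ t ≥ (0:ℝ), φ t ∈ Set.Icc (0:ℝ) 1)
    (hφlt : ∀ t > (0:ℝ), φ t < 1)
    (hT : ∀ x ∈ K, ∀ y ∈ K, dist (T x) (T y) ≤ φ (dist x y) * dist x y)
    (xbar : X) (hxbar : xbar ∈ K) (hfix : T xbar = xbar) :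
    ∀ M > (0:ℝ), ∀ ε > (0:ℝ), ∃ δ > (0:ℝ), ∃ k : ℕ,
      ∀ n : ℕ, n ≥ k → ∀ x : ℕ → X, (∀ i ≤ n, x i ∈ K) →
        dist (x 0) xbar ≤ M → (∀ i < n, dist (x (i+1)) (T (x i)) ≤ δ) →
        ∀ i : ℕ, k ≤ i → i ≤ n → dist (x i) xbar ≤ ε := by
  intro M hM ε hε
  have hε2 : (0:ℝ) < ε / 2 := by linarith
  set q := φ (ε / 2) with hq
  have hq0 : 0 ≤ q := (hφrange _ hε2.le).1
  have hq1 : q < 1 := hφlt _ hε2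
  set r := (1 + q) / 2 with hr
  have hr0 : 0 ≤ r := by rw [hr]; linarith
  have hr1 : r < 1 := by rw [hr]; linarith
  set δ := (1 - q) * ε / 2 with hδ
  have hδ0 : 0 < δ := by rw [hδ]; nlinarith
  set M' := max M ε with hM'
  have hM'0 : 0 < M' := lt_of_lt_of_le hM (le_max_left _ _)
  have hεM' : ε ≤ M' := le_max_right _ _
  obtain ⟨k, hk⟩ := exists_pow_lt_of_lt_one (div_pos hε hM'0) hr1
  have hkM : r ^ k * M' ≤ ε := by
    rw [lt_div_iff₀ hM'0] at hk
    linarith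
  refine ⟨δ, hδ0, k, ?_⟩
  intro n hn x hxK hx0 hstep i hki hin
  have key : ∀ j, j < n →
      (dist (x j) xbar ≤ ε → dist (x (j+1)) xbar ≤ ε) ∧
      (ε < dist (x j) xbar → dist (x (j+1)) xbar ≤ r * dist (x j) xbar) := by
    intro j hj
    have hxj : x j ∈ K := hxK j hj.le
    have hTd : dist (T (x j)) xbar ≤ φ (dist (x j) xbar) * dist (x j) xbar := by
      have h := hT (x j) hxj xbar hxbar
      rwa [hfix] at h
    have htri : dist (x (j+1)) xbar ≤ δ + dist (T (x j)) xbar := by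
      have h1 := dist_triangle (x (j+1)) (T (x j)) xbar
      have h2 := hstep j hj
      linarith
    set d := dist (x j) xbar with hd
    have hd0 : 0 ≤ d := dist_nonneg
    constructor
    · intro hdε
      rcases le_or_gt d (ε / 2) with hcase | hcase
      · have hφd : φ d ≤ 1 := (hφrange d hd0).2
        have hφd0 : 0 ≤ φ d := (hφrange d hd0).1
        have h1 : φ d * d ≤ d := by nlinarith
        have h2 : 0 ≤ q * ε := mul_nonneg hq0 hε.le
        linarith [htri, hTd, h1]
      · have hφd : φ d ≤ q := hφmono hε2.le (Set.mem_Ici.2 hd0) hcase.le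
        have h1 : φ d * d ≤ q * d := mul_le_mul_of_nonneg_right hφd hd0
        have h2 : q * d ≤ q * ε := mul_le_mul_of_nonneg_left hdε hq0
        linarith [htri, hTd]
    · intro hdε
      have hεd : ε / 2 ≤ d := by linarith
      have hφd : φ d ≤ q := hφmono hε2.le (Set.mem_Ici.2 hd0) hεd
      have h1 : φ d * d ≤ q * d := mul_le_mul_of_nonneg_right hφd hd0
      have h2 : (1 - q) * ε ≤ (1 - q) * d := mul_le_mul_of_nonneg_left hdε.le (by linarith)
      have h3 : r * d = q * d + (1 - q) * d / 2 := by rw [hr]; ring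
      linarith [htri, hTd]
  have main : ∀ j, j ≤ n → dist (x j) xbar ≤ max ε (r ^ j * M') := by
    intro j
    induction j with
    | zero =>
      intro _
      have h0 : dist (x 0) xbar ≤ M' := le_trans hx0 (le_max_left M ε)
      have : dist (x 0) xbar ≤ r ^ 0 * M' := by
        rw [pow_zero, one_mul]; exact h0
      exact le_max_of_le_right this
    | succ j ih =>
      intro hjn
      have hjn' : j < n := hjn
      have ihj := ih hjn'.le
      rcases le_or_gt (dist (x j) xbar) ε with h | h
      · exact le_max_of_le_left ((key j hjn').1 h)
      · have hdj : dist (x j) xbar ≤ r ^ j * M' := by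
          rcases le_max_iff.mp ihj with h1 | h1
          · linarith
          · exact h1
        have hstep2 := (key j hjn').2 h
        refine le_max_of_le_right ?_
        calc dist (x (j+1)) xbar ≤ r * dist (x j) xbar := hstep2
          _ ≤ r * (r ^ j * M') := by
              exact mul_le_mul_of_nonneg_left hdj hr0
          _ = r ^ (j+1) * M' := by ring
  have hmain := main i hin
  have hri : r ^ i * M' ≤ r ^ k * M' := by
    have := pow_le_pow_of_le_one hr0 hr1.le hki
    exact mul_le_mul_of_nonneg_right this hM'0.le
  rcases le_max_iff.mp hmain with h | h
  · exact h
  · linarith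
end

section
/- If a sequence (x_n) in K satisfies ρ(x_n, T x_n) → 0, then (x_n) is a Cauchy sequence, and hence converges to the unique fixed point of T. -/
open Filter Topology

/-- If `ρ(x_n, T x_n) → 0` then `(x_n)` is Cauchy and converges to the
unique fixed point of `T`. -/
theorem stmt_7 {X : Type*} [MetricSpace X] [CompleteSpace X]
    (K : Set X) (hKne : K.Nonempty) (hKcl : IsClosed K)
    (T : X → X) (hTK : Set.MapsTo T K K) (φ : ℝ → ℝ)
    (hφmono : AntitoneOn φ (Set.Ici 0))
    (hφrange : ∀ t ≥ (0:ℝ), φ t ∈ Set.Icc (0:ℝ) 1)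
    (hφlt : ∀ t > (0:ℝ), φ t < 1)
    (hT : ∀ x ∈ K, ∀ y ∈ K, dist (T x) (T y) ≤ φ (dist x y) * dist x y)
    (xbar : X) (hxbar : xbar ∈ K) (hfix : T xbar = xbar)
    (x : ℕ → X) (hx : ∀ n, x n ∈ K)
    (happrox : Tendsto (fun n => dist (x n) (T (x n))) atTop (𝓝 0)) :
    CauchySeq x ∧ Tendsto x atTop (𝓝 xbar) := by
  have htend : Tendsto x atTop (𝓝 xbar) := by
    rw [Metric.tendsto_atTop]
    intro ε hε
    set c := φ ε with hc
    have hc1 : c < 1 := hφlt ε hε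
    have hpos : 0 < ε * (1 - c) := mul_pos hε (by linarith)
    obtain ⟨N, hN⟩ := (Metric.tendsto_atTop.mp happrox) (ε * (1 - c)) hpos
    refine ⟨N, fun n hn => ?_⟩
    by_contra hcon
    push_neg at hcon
    set d := dist (x n) xbar with hd
    have hdε : ε ≤ d := hcon
    have hd0 : 0 < d := lt_of_lt_of_le hε hdε
    have hφd : φ d ≤ c := hφmono (le_of_lt hε) (le_of_lt hd0) hdε
    have hT' : dist (T (x n)) xbar ≤ φ d * d := by
      have := hT (x n) (hx n) xbar hxbar
      rwa [hfix] at this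
    have htri : d ≤ dist (x n) (T (x n)) + φ d * d :=
      le_trans (dist_triangle (x n) (T (x n)) xbar) (by linarith)
    have hεn : dist (x n) (T (x n)) < ε * (1 - c) := by
      have := hN n hn
      rwa [Real.dist_eq, sub_zero, abs_of_nonneg dist_nonneg] at this
    have : φ d * d ≤ c * d := mul_le_mul_of_nonneg_right hφd (le_of_lt hd0)
    nlinarith
  exact ⟨htend.cauchySeq, htend⟩
end

section
/- For each t ∈ [0,1), the set S = {t ∈ [0,1) : tT has a (unique) fixed point in Int(G)} is open in [0,1). In detail: if t₀ ∈ S with fixed point x_{t₀} and B[x_{t₀}, r] ⊆ Int(G), then every t ∈ [0,1) with |t − t₀| < min{r(1−q)/(1+‖Tx_{t₀}‖), q − t₀} (for any q ∈ (t₀,1)) belongs to S. -/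
/-! For `t` close to `t₀` the map `x ↦ t • T x` is a `t`-contraction of `cl G` sending the ball
`B[x₀, r]` into itself: writing `x₀ = t₀ • T x₀`,
`‖t • T x - x₀‖ ≤ t ‖x - x₀‖ + |t - t₀| ‖T x₀‖ ≤ q r + r (1 - q) = r`.
Banach's fixed-point theorem on the ball gives the fixed point, and contractivity on `cl G`
makes it the only one there. -/

open Metric Set Function

theorem LipschitzOnWith.exists_isFixedPt {α : Type*} [MetricSpace α] {f : α → α} {s : Set α}
    {K : NNReal} (hf : LipschitzOnWith K f s) (hK : K < 1) (hsc : IsComplete s)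
    (hsf : MapsTo f s s) {x : α} (hxs : x ∈ s) : ∃ y ∈ s, IsFixedPt f y :=
  let ⟨y, hys, hfy, _⟩ := ContractingWith.exists_fixedPoint' hsc hsf
    ⟨hK, hf.mapsToRestrict hsf⟩ hxs (edist_ne_top x (f x))
  ⟨y, hys, hfy⟩

theorem LipschitzOnWith.eq_of_isFixedPt {α : Type*} [MetricSpace α] {f : α → α} {s : Set α}
    {K : NNReal} (hf : LipschitzOnWith K f s) (hK : K < 1) {x y : α} (hx : x ∈ s) (hy : y ∈ s)
    (hfx : IsFixedPt f x) (hfy : IsFixedPt f y) : x = y := by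
  have hle : dist x y ≤ K * dist x y := by
    simpa only [hfx.eq, hfy.eq] using hf.dist_le_mul x hx y hy
  have hK' : (K : ℝ) < 1 := hK
  exact dist_le_zero.mp (by nlinarith [dist_nonneg (x := x) (y := y)])

section

variable {Y : Type*} [NormedAddCommGroup Y] [NormedSpace ℝ Y]

theorem LipschitzOnWith.const_smul {T : Y → Y} {s : Set Y} (hT : LipschitzOnWith 1 T s)
    (t : ℝ) : LipschitzOnWith ‖t‖₊ (fun x ↦ t • T x) s := by
  have := (lipschitzWith_smul (β := Y) t).comp_lipschitzOnWith hT
  rwa [mul_one] at this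

theorem mapsTo_closedBall_smul {T : Y → Y} {x₀ : Y} {r t₀ t q : ℝ}
    (hT : LipschitzOnWith 1 T (closedBall x₀ r)) (hfix : t₀ • T x₀ = x₀) (ht : 0 ≤ t)
    (htq : t ≤ q) (hclose : |t - t₀| * ‖T x₀‖ ≤ r * (1 - q)) :
    MapsTo (fun x ↦ t • T x) (closedBall x₀ r) (closedBall x₀ r) := by
  intro x hx
  have hr : 0 ≤ r := dist_nonneg.trans hx
  have hTx : ‖T x - T x₀‖ ≤ r := by
    rw [← dist_eq_norm]
    exact (hT.dist_le_mul x hx x₀ (mem_closedBall_self hr)).trans (by simpa using hx)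
  rw [mem_closedBall, dist_eq_norm]
  calc ‖t • T x - x₀‖ = ‖t • (T x - T x₀) + (t - t₀) • T x₀‖ := by
        conv_lhs => rw [← hfix]
        congr 1; module
    _ ≤ t * ‖T x - T x₀‖ + |t - t₀| * ‖T x₀‖ := by
        refine (norm_add_le _ _).trans_eq ?_
        rw [norm_smul, norm_smul, Real.norm_of_nonneg ht, Real.norm_eq_abs]
    _ ≤ q * r + r * (1 - q) := by
        have := mul_le_mul htq hTx (norm_nonneg _) (ht.trans htq)
        linarith
    _ = r := by ring

end

theorem stmt_8_general {Y : Type*} [NormedAddCommGroup Y] [NormedSpace ℝ Y] [CompleteSpace Y]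
    (G : Set Y)
    (T : Y → Y)
    (hT : ∀ x ∈ closure G, ∀ y ∈ closure G, ‖T x - T y‖ ≤ ‖x - y‖)
    (t₀ : ℝ)
    (x₀ : Y) (hfix : t₀ • T x₀ = x₀)
    (r : ℝ) (hr : 0 < r) (hball : Metric.closedBall x₀ r ⊆ interior G)
    (q : ℝ) :
    ∀ t ∈ Set.Ico (0:ℝ) 1,
      |t - t₀| < min (r * (1 - q) / (1 + ‖T x₀‖)) (q - t₀) →
      ∃ x ∈ interior G, t • T x = x ∧
        ∀ y ∈ closure G, t • T y = y → y = x := by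
  rintro t ⟨ht0, ht1⟩ hlt
  rw [lt_min_iff, lt_div_iff₀ (by positivity)] at hlt
  have htq : t ≤ q := by linarith [le_abs_self (t - t₀), hlt.2]
  have hclose : |t - t₀| * ‖T x₀‖ ≤ r * (1 - q) := by nlinarith [abs_nonneg (t - t₀), hlt.1]
  have hball_cl : closedBall x₀ r ⊆ closure G := hball.trans (interior_subset.trans subset_closure)
  have hTG : LipschitzOnWith 1 T (closure G) := .mk_one (by simpa only [dist_eq_norm] using hT)
  have hf := hTG.const_smul t
  have hK : ‖t‖₊ < 1 := by rw [← NNReal.coe_lt_coe, coe_nnnorm, Real.norm_of_nonneg ht0]; exact ht1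
  obtain ⟨x, hx, hfx⟩ := (hf.mono hball_cl).exists_isFixedPt hK isClosed_closedBall.isComplete
    (mapsTo_closedBall_smul (hTG.mono hball_cl) hfix ht0 htq hclose) (mem_closedBall_self hr.le)
  exact ⟨x, hball hx, hfx, fun y hy hfy ↦ hf.eq_of_isFixedPt hK hy (hball_cl hx) hfy hfx⟩

/-- Openness of `S`: if `t₀T` has fixed point `x₀ ∈ Int G`, `B[x₀,r] ⊆ Int G`,
`t₀ < q < 1`, then each `t ∈ [0,1)` with
`|t-t₀| < min (r(1-q)/(1+‖Tx₀‖)) (q-t₀)` belongs to `S`. -/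
theorem stmt_8 {Y : Type*} [NormedAddCommGroup Y] [NormedSpace ℝ Y] [CompleteSpace Y]
    (G : Set Y) (hGne : G.Nonempty) (h0 : (0:Y) ∈ interior G)
    (T : Y → Y)
    (hT : ∀ x ∈ closure G, ∀ y ∈ closure G, ‖T x - T y‖ ≤ ‖x - y‖)
    (t₀ : ℝ) (ht₀ : t₀ ∈ Set.Ico (0:ℝ) 1)
    (x₀ : Y) (hx₀ : x₀ ∈ interior G) (hfix : t₀ • T x₀ = x₀)
    (r : ℝ) (hr : 0 < r) (hball : Metric.closedBall x₀ r ⊆ interior G)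
    (q : ℝ) (hq : t₀ < q) (hq1 : q < 1) :
    ∀ t ∈ Set.Ico (0:ℝ) 1,
      |t - t₀| < min (r * (1 - q) / (1 + ‖T x₀‖)) (q - t₀) →
      ∃ x ∈ interior G, t • T x = x ∧
        ∀ y ∈ closure G, t • T y = y → y = x :=
  stmt_8_general G T hT t₀ x₀ hfix r hr hball q
end

section
/- If x ∈ B[x₀, r] (closed ball of radius r around x₀), t₀T x₀ = x₀, and t ∈ [0,1), then ‖tTx − x₀‖ ≤ tr + |t − t₀|·(‖T x₀‖ + 1). Consequently, if |t − t₀| ≤ r(1−t)/(1 + ‖T x₀‖), the closed ball B[x₀, r] is invariant under tT. -/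
/-- Key estimate for openness: `‖tTx - x₀‖ ≤ tr + |t-t₀|(‖Tx₀‖+1)`, and
invariance of the closed ball under `tT`. -/
theorem stmt_9 {Y : Type*} [NormedAddCommGroup Y] [NormedSpace ℝ Y]
    (G : Set Y) (T : Y → Y)
    (hT : ∀ x ∈ closure G, ∀ y ∈ closure G, ‖T x - T y‖ ≤ ‖x - y‖)
    (t₀ : ℝ) (ht₀ : t₀ ∈ Set.Ico (0:ℝ) 1)
    (x₀ : Y) (hx₀ : x₀ ∈ closure G) (hfix : t₀ • T x₀ = x₀)
    (r : ℝ) (hr : 0 < r) (hball : Metric.closedBall x₀ r ⊆ closure G)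
    (t : ℝ) (ht : t ∈ Set.Ico (0:ℝ) 1) :
    (∀ x ∈ Metric.closedBall x₀ r,
        ‖t • T x - x₀‖ ≤ t * r + |t - t₀| * (‖T x₀‖ + 1)) ∧
    (|t - t₀| ≤ r * (1 - t) / (1 + ‖T x₀‖) →
        ∀ x ∈ Metric.closedBall x₀ r, t • T x ∈ Metric.closedBall x₀ r) := by
  have key : ∀ x ∈ Metric.closedBall x₀ r,
      ‖t • T x - x₀‖ ≤ t * r + |t - t₀| * (‖T x₀‖ + 1) := by
    intro x hx
    have hxG : x ∈ closure G := hball hx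
    have hdist : ‖x - x₀‖ ≤ r := by
      simpa [dist_eq_norm] using Metric.mem_closedBall.mp hx
    have hTd : ‖T x - T x₀‖ ≤ r := (hT x hxG x₀ hx₀).trans hdist
    have h1 : t • T x - x₀ = t • (T x - T x₀) + (t - t₀) • T x₀ := by
      conv_lhs => rw [← hfix]
      module
    calc ‖t • T x - x₀‖ ≤ ‖t • (T x - T x₀)‖ + ‖(t - t₀) • T x₀‖ := by
          rw [h1]; exact norm_add_le _ _
      _ = t * ‖T x - T x₀‖ + |t - t₀| * ‖T x₀‖ := by
          rw [norm_smul, norm_smul, Real.norm_eq_abs, Real.norm_eq_abs,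
            abs_of_nonneg ht.1]
      _ ≤ t * r + |t - t₀| * (‖T x₀‖ + 1) := by
          have := ht.1
          have := abs_nonneg (t - t₀)
          nlinarith [norm_nonneg (T x₀)]
  refine ⟨key, fun hsmall x hx => ?_⟩
  have hpos : (0:ℝ) < 1 + ‖T x₀‖ := by positivity
  have h2 : |t - t₀| * (1 + ‖T x₀‖) ≤ r * (1 - t) := by
    rw [div_eq_inv_mul] at hsmall
    calc |t - t₀| * (1 + ‖T x₀‖) ≤ (1 + ‖T x₀‖)⁻¹ * (r * (1 - t)) * (1 + ‖T x₀‖) := by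
          gcongr
      _ = r * (1 - t) := by field_simp
  have := key x hx
  rw [Metric.mem_closedBall, dist_eq_norm]
  nlinarith [abs_nonneg (t - t₀), norm_nonneg (T x₀)]
end

section
/- The set S = {t ∈ [0,1) : tT has a unique fixed point x_t ∈ Int(G)} is closed in [0,1): if t₀ ∈ [0,1) is a limit of points of S, then t₀ ∈ S. -/
/-!
For `0 ≤ t < 1` the map `t • T` is a `t`-contraction on `cl G`, so it has at most one fixed point
there. For `0 ≤ s, t ≤ c < 1`, fixed points `x_s, x_t ∈ cl G` satisfy
`(1 - c) ‖x_s - x_t‖ ≤ |s - t| ‖T x_t‖` and `(1 - c) ‖T x_t‖ ≤ ‖T 0‖`, so `t ↦ x_t` is Lipschitz.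
Hence as `t → t₀` within `S` the `x_t` form a Cauchy filter, and their limit is a fixed point of
`t₀ • T` in `cl G`. It cannot lie on `∂G`: for `t₀ > 0` it would satisfy `T x = t₀⁻¹ • x` with
`t₀⁻¹ > 1`, and for `t₀ = 0` it is `0 ∈ Int G`.
-/

open Filter Topology Set

section SmulFixedPoints

variable {E : Type*} [NormedAddCommGroup E] [NormedSpace ℝ E] {T : E → E} {s : Set E}

lemma one_sub_mul_norm_sub_le_of_smul_fixed (hT : LipschitzOnWith 1 T s) {a b : ℝ} (ha : 0 ≤ a)
    {x y : E} (hx : x ∈ s) (hy : y ∈ s) (hxa : a • T x = x) (hyb : b • T y = y) :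
    (1 - a) * ‖x - y‖ ≤ |a - b| * ‖T y‖ := by
  have hsplit : x - y = a • (T x - T y) + (a - b) • T y := by
    rw [smul_sub, sub_smul, hxa, hyb]; abel
  have hxy : ‖x - y‖ ≤ a * ‖x - y‖ + |a - b| * ‖T y‖ :=
    calc ‖x - y‖ ≤ ‖a • (T x - T y)‖ + ‖(a - b) • T y‖ := hsplit ▸ norm_add_le _ _
      _ = a * ‖T x - T y‖ + |a - b| * ‖T y‖ := by
        rw [norm_smul, norm_smul, Real.norm_of_nonneg ha, Real.norm_eq_abs]
      _ ≤ a * ‖x - y‖ + |a - b| * ‖T y‖ := by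
        gcongr; simpa using hT.norm_sub_le hx hy
  linarith

lemma eq_of_smul_fixed (hT : LipschitzOnWith 1 T s) {a : ℝ} (ha₀ : 0 ≤ a) (ha₁ : a < 1)
    {x y : E} (hx : x ∈ s) (hy : y ∈ s) (hxa : a • T x = x) (hya : a • T y = y) : x = y := by
  have := one_sub_mul_norm_sub_le_of_smul_fixed hT ha₀ hx hy hxa hya
  rw [sub_self, abs_zero, zero_mul] at this
  exact sub_eq_zero.mp (norm_le_zero_iff.mp (nonpos_of_mul_nonpos_right this (by linarith)))

lemma one_sub_mul_norm_le_of_smul_fixed (hT : LipschitzOnWith 1 T s) (h0 : (0 : E) ∈ s) {a : ℝ}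
    (ha : 0 ≤ a) {x : E} (hx : x ∈ s) (hxa : a • T x = x) : (1 - a) * ‖T x‖ ≤ ‖T 0‖ := by
  have hTx : ‖T x‖ ≤ ‖x‖ + ‖T 0‖ := by
    simpa using (norm_sub_norm_le (T x) (T 0)).trans (hT.norm_sub_le hx h0)
  have hx : ‖x‖ = a * ‖T x‖ := by conv_lhs => rw [← hxa, norm_smul, Real.norm_of_nonneg ha]
  linarith

lemma lipschitzOnWith_smul_fixed (hT : LipschitzOnWith 1 T s) (h0 : (0 : E) ∈ s) {c : ℝ}
    (hc : c < 1) {φ : ℝ → E} {U : Set ℝ} (hU : U ⊆ Icc 0 c)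
    (hφ : ∀ t ∈ U, φ t ∈ s ∧ t • T (φ t) = φ t) :
    LipschitzOnWith (Real.toNNReal (‖T 0‖ / (1 - c) ^ 2)) φ U := by
  refine LipschitzOnWith.of_dist_le' fun a ha b hb => ?_
  obtain ⟨ha₀, hac⟩ := hU ha
  obtain ⟨hb₀, hbc⟩ := hU hb
  have hc' : 0 < 1 - c := by linarith
  have hdist := one_sub_mul_norm_sub_le_of_smul_fixed hT ha₀ (hφ a ha).1 (hφ b hb).1
    (hφ a ha).2 (hφ b hb).2
  have hTb := one_sub_mul_norm_le_of_smul_fixed hT h0 hb₀ (hφ b hb).1 (hφ b hb).2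
  rw [dist_eq_norm, Real.dist_eq, div_mul_eq_mul_div, le_div_iff₀ (by positivity)]
  calc ‖φ a - φ b‖ * (1 - c) ^ 2 = (1 - c) * ‖φ a - φ b‖ * (1 - c) := by ring
    _ ≤ (1 - a) * ‖φ a - φ b‖ * (1 - c) := by gcongr
    _ ≤ |a - b| * ‖T (φ b)‖ * (1 - c) := by gcongr
    _ = |a - b| * ((1 - c) * ‖T (φ b)‖) := by ring
    _ ≤ |a - b| * ((1 - b) * ‖T (φ b)‖) := by gcongr
    _ ≤ ‖T 0‖ * |a - b| := by rw [mul_comm ‖T 0‖]; gcongr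

lemma exists_smul_fixed_of_mem_closure [CompleteSpace E] (hT : LipschitzOnWith 1 T s)
    (hs : IsClosed s) (h0 : (0 : E) ∈ s) {t₀ : ℝ} (ht₀ : t₀ < 1)
    (hcl : t₀ ∈ closure {t : ℝ | 0 ≤ t ∧ ∃ x ∈ s, t • T x = x}) :
    ∃ x ∈ s, t₀ • T x = x := by
  set P := {t : ℝ | 0 ≤ t ∧ ∃ x ∈ s, t • T x = x}
  choose! φ hφ using fun t (ht : t ∈ P) => ht.2
  obtain ⟨c, ht₀c, hc⟩ := exists_between ht₀
  set U := P ∩ Iic c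
  have : NeBot (𝓝[U] t₀) := by
    rw [nhdsWithin_inter_of_mem' (mem_nhdsWithin_of_mem_nhds (Iic_mem_nhds ht₀c))]
    exact mem_closure_iff_nhdsWithin_neBot.mp hcl
  have hφU : UniformContinuousOn φ U :=
    (lipschitzOnWith_smul_fixed hT h0 hc (fun t ht => ⟨ht.1.1, ht.2⟩)
      fun t ht => hφ t ht.1).uniformContinuousOn
  obtain ⟨x, hx⟩ := cauchy_map_iff_exists_tendsto.mp
    ((cauchy_nhds.mono (nhdsWithin_le_nhds (a := t₀))).map_of_le hφU inf_le_right)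
  have hφs : ∀ᶠ t in 𝓝[U] t₀, φ t ∈ s :=
    eventually_mem_nhdsWithin.mono fun t ht => (hφ t ht.1).1
  have hxs : x ∈ s := hs.mem_of_tendsto hx hφs
  have hTφ : Tendsto (fun t => T (φ t)) (𝓝[U] t₀) (𝓝 (T x)) :=
    (hT.continuousOn x hxs).tendsto.comp (tendsto_nhdsWithin_iff.mpr ⟨hx, hφs⟩)
  refine ⟨x, hxs, tendsto_nhds_unique ((tendsto_id.mono_left nhdsWithin_le_nhds).smul hTφ)
    (hx.congr' ?_)⟩
  exact eventually_mem_nhdsWithin.mono fun t ht => (hφ t ht.1).2.symm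

end SmulFixedPoints

theorem stmt_12_general {Y : Type*} [NormedAddCommGroup Y] [NormedSpace ℝ Y] [CompleteSpace Y]
    (G : Set Y) (h0 : (0:Y) ∈ interior G)
    (T : Y → Y)
    (hT : ∀ x ∈ closure G, ∀ y ∈ closure G, ‖T x - T y‖ ≤ ‖x - y‖)
    (hLS : ∀ x ∈ frontier G, ∀ l : ℝ, 1 < l → T x ≠ l • x) :
    ∀ t₀ ∈ Set.Ico (0:ℝ) 1,
      t₀ ∈ closure {t : ℝ | t ∈ Set.Ico (0:ℝ) 1 ∧
        ∃! x : Y, x ∈ interior G ∧ t • T x = x} →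
      ∃! x : Y, x ∈ interior G ∧ t₀ • T x = x := by
  intro t₀ ht₀ hcl
  have hT' : LipschitzOnWith 1 T (closure G) :=
    LipschitzOnWith.mk_one (by simpa only [dist_eq_norm] using hT)
  have hcl' : t₀ ∈ closure {t : ℝ | 0 ≤ t ∧ ∃ x ∈ closure G, t • T x = x} := by
    refine closure_mono ?_ hcl
    rintro t ⟨ht, y, ⟨hy, hfix⟩, -⟩
    exact ⟨ht.1, y, interior_subset_closure hy, hfix⟩
  obtain ⟨x, hxG, hx⟩ := exists_smul_fixed_of_mem_closure hT' isClosed_closure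
    (interior_subset_closure h0) ht₀.2 hcl'
  have hxint : x ∈ interior G := by
    by_contra hx'
    obtain rfl | ht₀pos := ht₀.1.eq_or_lt
    · rw [zero_smul] at hx
      exact hx' (hx ▸ h0)
    · exact hLS x ⟨hxG, hx'⟩ t₀⁻¹ ((one_lt_inv₀ ht₀pos).mpr ht₀.2)
        ((eq_inv_smul_iff₀ ht₀pos.ne').mpr hx)
  exact ⟨x, ⟨hxint, hx⟩, fun y hy =>
    eq_of_smul_fixed hT' ht₀.1 ht₀.2 (interior_subset_closure hy.1) hxG hy.2 hx⟩

/-- The set `S = {t ∈ [0,1) : tT has a unique fixed point in Int G}` is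
closed in `[0,1)`. -/
theorem stmt_12 {Y : Type*} [NormedAddCommGroup Y] [NormedSpace ℝ Y] [CompleteSpace Y]
    (G : Set Y) (hGne : G.Nonempty) (h0 : (0:Y) ∈ interior G)
    (T : Y → Y)
    (hT : ∀ x ∈ closure G, ∀ y ∈ closure G, ‖T x - T y‖ ≤ ‖x - y‖)
    (hLS : ∀ x ∈ frontier G, ∀ l : ℝ, 1 < l → T x ≠ l • x) :
    ∀ t₀ ∈ Set.Ico (0:ℝ) 1,
      t₀ ∈ closure {t : ℝ | t ∈ Set.Ico (0:ℝ) 1 ∧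
        ∃! x : Y, x ∈ interior G ∧ t • T x = x} →
      ∃! x : Y, x ∈ interior G ∧ t₀ • T x = x :=
  stmt_12_general G h0 T hT hLS
end

section
/- For each t ∈ [0,1), the mapping tT : cl(G) → Y has a unique fixed point x_t ∈ Int(G), and the mapping t ↦ x_t is Lipschitz on [0,b] for each 0 < b < 1. -/
section aux
variable {Y : Type*} [NormedAddCommGroup Y] [NormedSpace ℝ Y] [CompleteSpace Y]
variable {G : Set Y} {T : Y → Y}

/-- Key contraction estimate between fixed points of `s•T` and `t•T`. -/
lemma LS_aux_est (hT : ∀ x ∈ closure G, ∀ y ∈ closure G, ‖T x - T y‖ ≤ ‖x - y‖)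
    {s t : ℝ} (ht0 : 0 ≤ t) {xs xt : Y} (hxs : xs ∈ closure G) (hxt : xt ∈ closure G)
    (hfs : s • T xs = xs) (hft : t • T xt = xt) :
    (1 - t) * ‖xt - xs‖ ≤ |t - s| * ‖T xs‖ := by
  have h1 : xt - xs = t • (T xt - T xs) + (t - s) • T xs := by
    rw [smul_sub, sub_smul, hft, hfs]; abel
  have h2 : ‖xt - xs‖ ≤ t * ‖xt - xs‖ + |t - s| * ‖T xs‖ := by
    calc ‖xt - xs‖ = ‖t • (T xt - T xs) + (t - s) • T xs‖ := by rw [← h1]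
    _ ≤ ‖t • (T xt - T xs)‖ + ‖(t - s) • T xs‖ := norm_add_le _ _
    _ ≤ t * ‖xt - xs‖ + |t - s| * ‖T xs‖ := by
        rw [norm_smul, norm_smul, Real.norm_eq_abs, Real.norm_eq_abs, abs_of_nonneg ht0]
        gcongr
        exact hT xt hxt xs hxs
  nlinarith [norm_nonneg (xt - xs)]

/-- Norm bound on `T xs` for a fixed point `xs` of `s•T`. -/
lemma LS_aux_norm (hT : ∀ x ∈ closure G, ∀ y ∈ closure G, ‖T x - T y‖ ≤ ‖x - y‖)
    (h0c : (0:Y) ∈ closure G) {s : ℝ} (hs0 : 0 ≤ s)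
    {xs : Y} (hxs : xs ∈ closure G) (hfs : s • T xs = xs) :
    (1 - s) * ‖T xs‖ ≤ ‖T 0‖ := by
  have h1 : ‖T xs‖ ≤ ‖xs‖ + ‖T 0‖ := by
    calc ‖T xs‖ = ‖(T xs - T 0) + T 0‖ := by rw [sub_add_cancel]
    _ ≤ ‖T xs - T 0‖ + ‖T 0‖ := norm_add_le _ _
    _ ≤ ‖xs‖ + ‖T 0‖ := by
        have := hT xs hxs 0 h0c; simpa using add_le_add_right this ‖T 0‖
  have h2 : ‖xs‖ = s * ‖T xs‖ := by
    conv_lhs => rw [← hfs]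
    rw [norm_smul, Real.norm_eq_abs, abs_of_nonneg hs0]
  nlinarith

/-- Fixed points of `t•T` in `closure G` lie in the interior. -/
lemma LS_aux_int (h0 : (0:Y) ∈ interior G)
    (hLS : ∀ x ∈ frontier G, ∀ l : ℝ, 1 < l → T x ≠ l • x)
    {t : ℝ} (ht : t ∈ Set.Ico (0:ℝ) 1) {x : Y} (hx : x ∈ closure G)
    (hfx : t • T x = x) : x ∈ interior G := by
  by_contra hint
  have hfr : x ∈ frontier G := by
    rw [← closure_diff_interior]; exact ⟨hx, hint⟩
  rcases eq_or_lt_of_le ht.1 with h | h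
  · have : x = 0 := by rw [← hfx, ← h, zero_smul]
    rw [← closure_diff_interior] at hfr
    exact hfr.2 (by rw [this]; exact h0)
  · have hne : t ≠ 0 := ne_of_gt h
    have : T x = t⁻¹ • x := by
      conv_rhs => rw [← hfx]
      rw [smul_smul, inv_mul_cancel₀ hne, one_smul]
    exact hLS x hfr t⁻¹ ((one_lt_inv₀ h).2 ht.2) this
end aux

section aux2
variable {Y : Type*} [NormedAddCommGroup Y] [NormedSpace ℝ Y] [CompleteSpace Y]
variable {G : Set Y} {T : Y → Y}

open Filter Topology

/-- Existence of a fixed point of `t•T` for `t ∈ [0,1)`. -/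
lemma LS_aux_exists (h0 : (0:Y) ∈ interior G)
    (hT : ∀ x ∈ closure G, ∀ y ∈ closure G, ‖T x - T y‖ ≤ ‖x - y‖)
    (hLS : ∀ x ∈ frontier G, ∀ l : ℝ, 1 < l → T x ≠ l • x)
    {t : ℝ} (ht : t ∈ Set.Ico (0:ℝ) 1) : ∃ y ∈ closure G, t • T y = y := by
  have h0c : (0:Y) ∈ closure G := subset_closure (interior_subset h0)
  have ht1 : (0:ℝ) < 1 - t := by linarith [ht.2]
  set S : Set ℝ := {s : ℝ | s ∈ Set.Icc 0 t ∧ ∃ y ∈ closure G, s • T y = y} with hS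
  have h0S : (0:ℝ) ∈ S := ⟨⟨le_refl 0, ht.1⟩, 0, h0c, by simp⟩
  have hne : S.Nonempty := ⟨0, h0S⟩
  have hbdd : BddAbove S := ⟨t, fun s hs => hs.1.2⟩
  set c := sSup S with hc
  have hct : c ≤ t := csSup_le hne (fun s hs => hs.1.2)
  have hc0 : 0 ≤ c := le_csSup hbdd h0S
  have hc1 : c < 1 := lt_of_le_of_lt hct ht.2
  -- the sup is itself attained: closedness
  have cA : ∃ y ∈ closure G, c • T y = y := by
    obtain ⟨u, hu_mono, hu_tend, hu_mem⟩ := exists_seq_tendsto_sSup hne hbdd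
    choose x hxcl hxfix using fun n => (hu_mem n).2
    have hu0 : ∀ n, 0 ≤ u n := fun n => (hu_mem n).1.1
    have hut : ∀ n, u n ≤ t := fun n => (hu_mem n).1.2
    have hTbd : ∀ n, ‖T (x n)‖ ≤ ‖T 0‖ / (1 - t) := by
      intro n
      have h1 := LS_aux_norm hT h0c (hu0 n) (hxcl n) (hxfix n)
      rw [le_div_iff₀ ht1]
      nlinarith [norm_nonneg (T (x n)), hut n]
    set C : ℝ := ‖T 0‖ / (1 - t) / (1 - t) with hC
    have hC0 : 0 ≤ C := by positivity
    have hkey : ∀ n m, dist (x n) (x m) ≤ C * dist (u n) (u m) := by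
      intro n m
      have h1 := LS_aux_est hT (hu0 n) (hxcl m) (hxcl n) (hxfix m) (hxfix n)
      have h2 := LS_aux_norm hT h0c (hu0 m) (hxcl m) (hxfix m)
      have hN1 : (1 - t) * ‖T (x m)‖ ≤ ‖T 0‖ := by
        nlinarith [norm_nonneg (T (x m)), hut m]
      have hD : (1 - t) * ‖x n - x m‖ ≤ |u n - u m| * ‖T (x m)‖ := by
        nlinarith [norm_nonneg (x n - x m), hut n]
      rw [dist_eq_norm, Real.dist_eq, hC, div_div, div_mul_eq_mul_div,
        le_div_iff₀ (by nlinarith)]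
      nlinarith [mul_le_mul_of_nonneg_left hN1 (abs_nonneg (u n - u m)),
        mul_le_mul_of_nonneg_left hD ht1.le]
    have hcauchy : CauchySeq x := by
      rw [Metric.cauchySeq_iff]
      intro ε hε
      have huc : CauchySeq u := hu_tend.cauchySeq
      rw [Metric.cauchySeq_iff] at huc
      obtain ⟨N, hN⟩ := huc (ε / (C + 1)) (by positivity)
      refine ⟨N, fun m hm n hn => ?_⟩
      calc dist (x m) (x n) ≤ C * dist (u m) (u n) := hkey m n
      _ ≤ C * (ε / (C + 1)) := by
          have := hN m hm n hn
          exact mul_le_mul_of_nonneg_left this.le hC0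
      _ < ε := by
          rw [mul_div_assoc']
          rw [div_lt_iff₀ (by positivity)]
          nlinarith
    obtain ⟨z, hz⟩ := cauchySeq_tendsto_of_complete hcauchy
    have hzcl : z ∈ closure G := isClosed_closure.mem_of_tendsto hz
      (Filter.Eventually.of_forall hxcl)
    have hTx : Tendsto (fun n => T (x n)) atTop (𝓝 (T z)) := by
      rw [tendsto_iff_dist_tendsto_zero]
      refine squeeze_zero (fun n => dist_nonneg) (fun n => ?_)
        (tendsto_iff_dist_tendsto_zero.1 hz)
      rw [dist_eq_norm, dist_eq_norm]
      exact hT (x n) (hxcl n) z hzcl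
    have h1 : Tendsto (fun n => u n • T (x n)) atTop (𝓝 (c • T z)) := hu_tend.smul hTx
    have h2 : Tendsto (fun n => u n • T (x n)) atTop (𝓝 z) := by
      simpa only [hxfix] using hz
    exact ⟨z, hzcl, tendsto_nhds_unique h1 h2⟩
  rcases eq_or_lt_of_le hct with heq | hlt
  · exact heq ▸ cA
  -- openness step: if c < t we can go a bit further, contradiction
  · exfalso
    obtain ⟨xc, hxc_cl, hxc_fix⟩ := cA
    have hxc_int : xc ∈ interior G := LS_aux_int h0 hLS ⟨hc0, hc1⟩ hxc_cl hxc_fix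
    obtain ⟨ε, hε0, hball⟩ := Metric.isOpen_iff.1 isOpen_interior xc hxc_int
    set r : ℝ := ε / 2 with hr
    have hr0 : 0 < r := by positivity
    have hKG : Metric.closedBall xc r ⊆ G :=
      (Metric.closedBall_subset_ball (by linarith)).trans (hball.trans interior_subset)
    set M : ℝ := ‖T xc‖ with hM
    have hM0 : 0 ≤ M := norm_nonneg _
    set δ : ℝ := min (t - c) (r * (1 - t) / (M + 1)) with hδ
    have hδ0 : 0 < δ := lt_min (by linarith) (by positivity)
    set s : ℝ := c + δ with hs
    have hst : s ≤ t := by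
      have : δ ≤ t - c := min_le_left _ _
      linarith
    have hs0 : 0 ≤ s := by linarith
    have hs1 : s < 1 := lt_of_le_of_lt hst ht.2
    have hδM : δ * M ≤ r * (1 - t) := by
      have h1 : δ ≤ r * (1 - t) / (M + 1) := min_le_right _ _
      have h2 : δ * M ≤ (r * (1 - t) / (M + 1)) * M :=
        mul_le_mul_of_nonneg_right h1 hM0
      calc δ * M ≤ (r * (1 - t) / (M + 1)) * M := h2
      _ ≤ r * (1 - t) := by
          rw [div_mul_eq_mul_div, div_le_iff₀ (by positivity)]
          nlinarith
    set K : Set Y := Metric.closedBall xc r with hK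
    have hKcl : ∀ y ∈ K, y ∈ closure G := fun y hy => subset_closure (hKG hy)
    have hmaps : Set.MapsTo (fun y => s • T y) K K := by
      intro y hy
      have hy' : ‖y - xc‖ ≤ r := by
        rw [← dist_eq_norm]; exact Metric.mem_closedBall.1 hy
      have hTy : ‖T y - T xc‖ ≤ ‖y - xc‖ := hT y (hKcl y hy) xc hxc_cl
      rw [hK, Metric.mem_closedBall, dist_eq_norm]
      have heq2 : s • T y - xc = s • (T y - T xc) + (s - c) • T xc := by
        rw [smul_sub, sub_smul, hxc_fix]; abel
      calc ‖s • T y - xc‖ = ‖s • (T y - T xc) + (s - c) • T xc‖ := by rw [heq2]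
      _ ≤ ‖s • (T y - T xc)‖ + ‖(s - c) • T xc‖ := norm_add_le _ _
      _ = s * ‖T y - T xc‖ + |s - c| * ‖T xc‖ := by
          rw [norm_smul, norm_smul, Real.norm_eq_abs, Real.norm_eq_abs,
            abs_of_nonneg hs0]
      _ ≤ t * r + r * (1 - t) := by
          have hsc : |s - c| = δ := by rw [hs]; simp [abs_of_nonneg hδ0.le]
          have hb1 : s * ‖T y - T xc‖ ≤ t * r := by
            have := hTy.trans hy'
            nlinarith
          rw [hsc, ← hM]
          linarith [hδM]
      _ = r := by ring
    have hKcomp : IsComplete K := Metric.isClosed_closedBall.isComplete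
    have hcontr : ContractingWith s.toNNReal (hmaps.restrict _ K K) := by
      constructor
      · rw [show (1:NNReal) = (1:ℝ).toNNReal by simp]
        exact (Real.toNNReal_lt_toNNReal_iff one_pos).2 hs1
      · apply LipschitzWith.of_dist_le_mul
        rintro ⟨y, hy⟩ ⟨z, hz⟩
        rw [Subtype.dist_eq, Subtype.dist_eq, Set.MapsTo.val_restrict_apply,
          Set.MapsTo.val_restrict_apply]
        simp only
        rw [dist_eq_norm, dist_eq_norm, ← smul_sub, norm_smul, Real.norm_eq_abs,
          abs_of_nonneg hs0, Real.coe_toNNReal _ hs0]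
        exact mul_le_mul_of_nonneg_left (hT y (hKcl y hy) z (hKcl z hz)) hs0
    obtain ⟨y, hyK, hyfix, -, -⟩ := hcontr.exists_fixedPoint' hKcomp hmaps
      (Metric.mem_closedBall_self hr0.le) (edist_ne_top _ _)
    have hsS : s ∈ S := ⟨⟨hs0, hst⟩, y, hKcl y hyK, hyfix⟩
    have : s ≤ c := le_csSup hbdd hsS
    linarith

end aux2



/-- Theorem 2, first part: for each `t ∈ [0,1)` the mapping `tT` has a
unique fixed point `x_t ∈ Int G`, and `t ↦ x_t` is Lipschitz on `[0,b]`
for each `0 < b < 1`. -/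
theorem stmt_13 {Y : Type*} [NormedAddCommGroup Y] [NormedSpace ℝ Y] [CompleteSpace Y]
    (G : Set Y) (hGne : G.Nonempty) (h0 : (0:Y) ∈ interior G)
    (T : Y → Y)
    (hT : ∀ x ∈ closure G, ∀ y ∈ closure G, ‖T x - T y‖ ≤ ‖x - y‖)
    (hLS : ∀ x ∈ frontier G, ∀ l : ℝ, 1 < l → T x ≠ l • x) :
    ∃ x : ℝ → Y,
      (∀ t ∈ Set.Ico (0:ℝ) 1, x t ∈ interior G ∧ t • T (x t) = x t ∧
        ∀ y ∈ closure G, t • T y = y → y = x t) ∧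
      (∀ b : ℝ, 0 < b → b < 1 → ∃ L : NNReal, LipschitzOnWith L x (Set.Icc 0 b)) := by
    classical
  have h0c : (0:Y) ∈ closure G := subset_closure (interior_subset h0)
  have hex : ∀ t : ℝ, t ∈ Set.Ico (0:ℝ) 1 → ∃ y, y ∈ closure G ∧ t • T y = y := by
    intro t ht
    obtain ⟨y, hy1, hy2⟩ := LS_aux_exists h0 hT hLS ht
    exact ⟨y, hy1, hy2⟩
  set x : ℝ → Y := fun t =>
    if h : t ∈ Set.Ico (0:ℝ) 1 then (hex t h).choose else 0 with hx
  have hxcl : ∀ t (ht : t ∈ Set.Ico (0:ℝ) 1), x t ∈ closure G := by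
    intro t ht; rw [hx]; simp only [dif_pos ht]; exact (hex t ht).choose_spec.1
  have hxfix : ∀ t (ht : t ∈ Set.Ico (0:ℝ) 1), t • T (x t) = x t := by
    intro t ht; rw [hx]; simp only [dif_pos ht]; exact (hex t ht).choose_spec.2
  refine ⟨x, fun t ht => ?_, fun b hb0 hb1 => ?_⟩
  · refine ⟨LS_aux_int h0 hLS ht (hxcl t ht) (hxfix t ht), hxfix t ht, fun y hy hfy => ?_⟩
    have h1 := LS_aux_est hT ht.1 hy (hxcl t ht) hfy (hxfix t ht)
    simp only [sub_self, abs_zero, zero_mul] at h1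
    have : ‖x t - y‖ ≤ 0 := by nlinarith [norm_nonneg (x t - y), ht.2]
    have h2 : x t - y = 0 := norm_le_zero_iff.1 this
    rw [← sub_eq_zero, ← neg_sub, h2, neg_zero]
  · refine ⟨Real.toNNReal (‖T 0‖ / (1 - b) ^ 2), LipschitzOnWith.of_dist_le_mul ?_⟩
    intro s hs u hu
    have hb : (0:ℝ) < 1 - b := by linarith
    have hsI : s ∈ Set.Ico (0:ℝ) 1 := ⟨hs.1, lt_of_le_of_lt hs.2 hb1⟩
    have huI : u ∈ Set.Ico (0:ℝ) 1 := ⟨hu.1, lt_of_le_of_lt hu.2 hb1⟩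
    have h1 := LS_aux_est hT hsI.1 (hxcl u huI) (hxcl s hsI) (hxfix u huI) (hxfix s hsI)
    have h2 := LS_aux_norm hT h0c huI.1 (hxcl u huI) (hxfix u huI)
    have hN1 : (1 - b) * ‖T (x u)‖ ≤ ‖T 0‖ := by
      nlinarith [norm_nonneg (T (x u)), hu.2]
    have hD : (1 - b) * ‖x s - x u‖ ≤ |s - u| * ‖T (x u)‖ := by
      nlinarith [norm_nonneg (x s - x u), hs.2]
    rw [dist_eq_norm, Real.dist_eq,
      Real.coe_toNNReal _ (by positivity : (0:ℝ) ≤ ‖T 0‖ / (1 - b) ^ 2),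
      div_mul_eq_mul_div, le_div_iff₀ (by positivity)]
    nlinarith [mul_le_mul_of_nonneg_left hN1 (abs_nonneg (s - u)),
      mul_le_mul_of_nonneg_left hD hb.le]
end

section
/- Every fixed point x_t of tT with t ∈ [0,1] satisfies ‖x_t‖ ≤ max(1, ‖T0‖/(1 − φ(1))). -/
/-- Every fixed point of `tT` with `t ∈ [0,1]` satisfies
`‖x_t‖ ≤ max 1 (‖T0‖/(1-φ(1)))`. -/
theorem stmt_15 {Y : Type*} [NormedAddCommGroup Y] [NormedSpace ℝ Y]
    (G : Set Y) (h0 : (0:Y) ∈ closure G) (T : Y → Y) (φ : ℝ → ℝ)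
    (hφmono : AntitoneOn φ (Set.Ici 0))
    (hφrange : ∀ s ≥ (0:ℝ), φ s ∈ Set.Icc (0:ℝ) 1)
    (hφlt : ∀ s > (0:ℝ), φ s < 1)
    (hT : ∀ x ∈ closure G, ∀ y ∈ closure G, ‖T x - T y‖ ≤ φ ‖x - y‖ * ‖x - y‖)
    (t : ℝ) (ht : t ∈ Set.Icc (0:ℝ) 1)
    (x : Y) (hx : x ∈ closure G) (hfix : t • T x = x) :
    ‖x‖ ≤ max 1 (‖T 0‖ / (1 - φ 1)) := by
  rcases le_or_gt ‖x‖ 1 with h1 | h1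
  · exact le_max_of_le_left h1
  · refine le_max_of_le_right ?_
    have hφ1 : φ 1 < 1 := hφlt 1 one_pos
    have hpos : 0 < 1 - φ 1 := by linarith
    have hxpos : (0:ℝ) < ‖x‖ := by linarith
    have hphix : φ ‖x‖ ≤ φ 1 :=
      hφmono (Set.mem_Ici.2 zero_le_one) (Set.mem_Ici.2 hxpos.le) h1.le
    have hTx : ‖T x - T 0‖ ≤ φ ‖x - 0‖ * ‖x - 0‖ := hT x hx 0 h0
    rw [sub_zero] at hTx
    have hxnorm : ‖x‖ ≤ ‖T x‖ := by
      calc ‖x‖ = ‖t • T x‖ := by rw [hfix]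
        _ = |t| * ‖T x‖ := by rw [norm_smul, Real.norm_eq_abs]
        _ ≤ 1 * ‖T x‖ := by
            apply mul_le_mul_of_nonneg_right _ (norm_nonneg _)
            rw [abs_of_nonneg ht.1]; exact ht.2
        _ = ‖T x‖ := one_mul _
    have key : ‖x‖ ≤ φ 1 * ‖x‖ + ‖T 0‖ := by
      calc ‖x‖ ≤ ‖T x‖ := hxnorm
        _ ≤ ‖T x - T 0‖ + ‖T 0‖ := by have := norm_add_le (T x - T 0) (T 0); simpa using this
        _ ≤ φ ‖x‖ * ‖x‖ + ‖T 0‖ := by linarith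
        _ ≤ φ 1 * ‖x‖ + ‖T 0‖ := by nlinarith
    rw [le_div_iff₀ hpos]
    nlinarith
end

section
/- If (t_n) ⊆ [0,1) with t_n → 1 and x_{t_n} are the corresponding fixed points of t_n T (with ‖T x_{t_n}‖ ≤ M for all n), then (x_{t_n}) is a Cauchy sequence. -/
/-!
Writing `x_m - x_n = t_m (T x_m - T x_n) + (t_m - t_n) T x_n` and using `|t_m| ≤ 1` gives
`d ≤ φ(d) d + M |t_m - t_n|` for `d = ‖x_m - x_n‖`. If `d ≥ ε`, monotonicity of `φ` turns this
into `(1 - φ(ε)) ε ≤ M |t_m - t_n|`, which fails once `m, n` are large since `(t_n)` converges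
and `φ(ε) < 1`.
-/

open Filter Topology

theorem norm_sub_le_of_smul_eq {𝕜 E : Type*} [NormedField 𝕜] [SeminormedAddCommGroup E]
    [NormedSpace 𝕜 E] {s r : 𝕜} {a b u v : E} (hs : ‖s‖ ≤ 1) (hu : s • a = u) (hv : r • b = v) :
    ‖u - v‖ ≤ ‖a - b‖ + ‖s - r‖ * ‖b‖ := by
  have hsplit : u - v = s • (a - b) + (s - r) • b := by
    rw [← hu, ← hv, smul_sub, sub_smul]
    abel
  calc ‖u - v‖ ≤ ‖s • (a - b)‖ + ‖(s - r) • b‖ := hsplit ▸ norm_add_le _ _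
    _ = ‖s‖ * ‖a - b‖ + ‖s - r‖ * ‖b‖ := by rw [norm_smul, norm_smul]
    _ ≤ ‖a - b‖ + ‖s - r‖ * ‖b‖ := by
      gcongr
      exact mul_le_of_le_one_left (norm_nonneg _) hs

theorem lt_of_le_mul_self_add_of_antitoneOn {φ : ℝ → ℝ} (hφ : AntitoneOn φ (Set.Ici 0))
    {ε d c : ℝ} (hε : 0 < ε) (hφε : φ ε ≤ 1) (hd : d ≤ φ d * d + c)
    (hc : c < (1 - φ ε) * ε) : d < ε := by
  by_contra! hεd
  have hφd : φ d ≤ φ ε := hφ (Set.mem_Ici.2 hε.le) (Set.mem_Ici.2 (hε.le.trans hεd)) hεd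
  have : (1 - φ ε) * ε ≤ (1 - φ ε) * d := mul_le_mul_of_nonneg_left hεd (sub_nonneg.2 hφε)
  nlinarith

theorem stmt_16_general {Y : Type*} [NormedAddCommGroup Y] [NormedSpace ℝ Y]
    (G : Set Y) (T : Y → Y) (φ : ℝ → ℝ)
    (hφmono : AntitoneOn φ (Set.Ici 0))
    (hφlt : ∀ s > (0:ℝ), φ s < 1)
    (hT : ∀ x ∈ closure G, ∀ y ∈ closure G, ‖T x - T y‖ ≤ φ ‖x - y‖ * ‖x - y‖)
    (t : ℕ → ℝ) (ht : ∀ n, t n ∈ Set.Ico (0:ℝ) 1)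
    (htlim : Tendsto t atTop (𝓝 1))
    (x : ℕ → Y) (hx : ∀ n, x n ∈ closure G)
    (hfix : ∀ n, t n • T (x n) = x n)
    (M : ℝ) (hM : ∀ n, ‖T (x n)‖ ≤ M) :
    CauchySeq x := by
  have hdist : ∀ m n, dist (x m) (x n) ≤
      φ (dist (x m) (x n)) * dist (x m) (x n) + dist (t m) (t n) * M := by
    intro m n
    have htm : ‖t m‖ ≤ 1 := by
      rw [Real.norm_of_nonneg (ht m).1]
      exact (ht m).2.le
    rw [dist_eq_norm, dist_eq_norm (t m)]
    calc ‖x m - x n‖ ≤ ‖T (x m) - T (x n)‖ + ‖t m - t n‖ * ‖T (x n)‖ :=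
          norm_sub_le_of_smul_eq htm (hfix m) (hfix n)
      _ ≤ _ := by gcongr; exacts [hT _ (hx m) _ (hx n), hM n]
  refine Metric.cauchySeq_iff.2 fun ε hε => ?_
  have hgap : 0 < (1 - φ ε) * ε := mul_pos (sub_pos.2 (hφlt ε hε)) hε
  have hsmall : ∀ᶠ p : ℕ × ℕ in atTop, dist (t p.1) (t p.2) * M < (1 - φ ε) * ε := by
    have h := (cauchySeq_iff_tendsto_dist_atTop_0.1 htlim.cauchySeq).mul_const M
    rw [zero_mul] at h
    exact h.eventually (gt_mem_nhds hgap)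
  obtain ⟨N, hN⟩ := eventually_atTop_prod_self'.1 hsmall
  exact ⟨N, fun m hm n hn => lt_of_le_mul_self_add_of_antitoneOn hφmono hε (hφlt ε hε).le
    (hdist m n) (hN m hm n hn)⟩

/-- If `t_n → 1⁻` and `x_{t_n}` are fixed points of `t_n T` with
`‖T x_{t_n}‖ ≤ M`, then `(x_{t_n})` is Cauchy. -/
theorem stmt_16 {Y : Type*} [NormedAddCommGroup Y] [NormedSpace ℝ Y]
    (G : Set Y) (T : Y → Y) (φ : ℝ → ℝ)
    (hφmono : AntitoneOn φ (Set.Ici 0))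
    (hφrange : ∀ s ≥ (0:ℝ), φ s ∈ Set.Icc (0:ℝ) 1)
    (hφlt : ∀ s > (0:ℝ), φ s < 1)
    (hT : ∀ x ∈ closure G, ∀ y ∈ closure G, ‖T x - T y‖ ≤ φ ‖x - y‖ * ‖x - y‖)
    (t : ℕ → ℝ) (ht : ∀ n, t n ∈ Set.Ico (0:ℝ) 1)
    (htlim : Tendsto t atTop (𝓝 1))
    (x : ℕ → Y) (hx : ∀ n, x n ∈ closure G)
    (hfix : ∀ n, t n • T (x n) = x n)
    (M : ℝ) (hM : ∀ n, ‖T (x n)‖ ≤ M) :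
    CauchySeq x :=
  stmt_16_general G T φ hφmono hφlt hT t ht htlim x hx hfix M hM
end

section
/- If T satisfies the Rakotch contractive condition and the Leray–Schauder boundary condition on G with 0 ∈ Int(G), then T has a unique fixed point x₁ ∈ cl(G), the map t ↦ x_t (where x_t is the unique fixed point of tT) is continuous on [0,1], and x₁ = lim_{t→1⁻} x_t. -/
/-!
For `t < 1` the map `t • T` is a strict contraction on `cl G`, and for fixed points `x` of `s • T`
and `y` of `t • T` the Rakotch condition gives `‖x - y‖ (1 - φ ‖x - y‖) ≤ |s - t| ‖T y‖`. Since
`ε ↦ ε (1 - φ ε)` is positive and monotone and fixed points are a priori bounded, fixed points are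
unique and depend uniformly continuously on the parameter; in particular the set of `t ∈ [0, 1]`
for which `t • T` has a fixed point in `cl G` is closed. By the Leray–Schauder condition a fixed
point for `t < 1` lies in `Int G`, so Banach's theorem on a small ball around it yields fixed points
for all slightly larger parameters. Real induction from `t = 0`, with fixed point `0`, covers
`[0, 1]`.
-/

open Filter Topology Set Metric

section

variable {Y : Type*} [NormedAddCommGroup Y]

structure IsRakotchContractionOn (T : Y → Y) (K : Set Y) (φ : ℝ → ℝ) : Prop where
  antitoneOn : AntitoneOn φ (Ici 0)
  lt_one : ∀ s > 0, φ s < 1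
  norm_sub_le : ∀ x ∈ K, ∀ y ∈ K, ‖T x - T y‖ ≤ φ ‖x - y‖ * ‖x - y‖

namespace IsRakotchContractionOn

variable {T : Y → Y} {K : Set Y} {φ : ℝ → ℝ}

theorem lipschitzOnWith (hT : IsRakotchContractionOn T K φ) : LipschitzOnWith 1 T K := by
  refine LipschitzOnWith.mk_one fun x hx y hy => ?_
  rw [dist_eq_norm, dist_eq_norm]
  rcases (norm_nonneg (x - y)).eq_or_lt with h | h
  · simpa [← h] using hT.norm_sub_le x hx y hy
  · exact (hT.norm_sub_le x hx y hy).trans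
      (mul_le_of_le_one_left h.le (hT.lt_one _ h).le)

theorem mul_one_sub_pos (hT : IsRakotchContractionOn T K φ) {ε : ℝ} (hε : 0 < ε) :
    0 < ε * (1 - φ ε) :=
  mul_pos hε (sub_pos.2 (hT.lt_one ε hε))

theorem mul_one_sub_le_mul_one_sub (hT : IsRakotchContractionOn T K φ) {ε d : ℝ}
    (hε : 0 < ε) (hεd : ε ≤ d) : ε * (1 - φ ε) ≤ d * (1 - φ d) := by
  have hφ : φ d ≤ φ ε := hT.antitoneOn hε.le (hε.le.trans hεd) hεd
  nlinarith [hT.lt_one ε hε]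

variable [NormedSpace ℝ Y]

theorem norm_le_of_smul_fixed (hT : IsRakotchContractionOn T K φ) (h0 : (0 : Y) ∈ K)
    {t : ℝ} (ht : t ∈ Icc (0 : ℝ) 1) {x : Y} (hx : x ∈ K) (hfix : t • T x = x) :
    ‖x‖ ≤ max 1 (‖T 0‖ / (1 - φ 1)) := by
  have hxTx : ‖x‖ ≤ ‖T x‖ := by
    calc ‖x‖ = t * ‖T x‖ := by rw [← norm_smul_of_nonneg ht.1, hfix]
      _ ≤ ‖T x‖ := mul_le_of_le_one_left (norm_nonneg _) ht.2
  have hTx : ‖T x‖ ≤ φ ‖x‖ * ‖x‖ + ‖T 0‖ := by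
    have := hT.norm_sub_le x hx 0 h0
    rw [sub_zero] at this
    linarith [norm_sub_norm_le (T x) (T 0)]
  rcases le_or_gt ‖x‖ 1 with h1 | h1
  · exact h1.trans (le_max_left _ _)
  · have hφ : φ ‖x‖ ≤ φ 1 :=
      hT.antitoneOn (mem_Ici.2 zero_le_one) (mem_Ici.2 (zero_le_one.trans h1.le)) h1.le
    have hφ1 : 0 < 1 - φ 1 := sub_pos.2 (hT.lt_one 1 one_pos)
    refine le_max_of_le_right ((le_div_iff₀ hφ1).2 ?_)
    nlinarith

theorem exists_norm_le_of_smul_fixed (hT : IsRakotchContractionOn T K φ)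
    (h0 : (0 : Y) ∈ K) :
    ∃ M > 0, ∀ t ∈ Icc (0 : ℝ) 1, ∀ x ∈ K, t • T x = x → ‖T x‖ ≤ M := by
  refine ⟨max 1 (‖T 0‖ / (1 - φ 1)) + ‖T 0‖, by positivity, fun t ht x hx hfix => ?_⟩
  have hTx : ‖T x - T 0‖ ≤ ‖x‖ := by
    simpa [dist_eq_norm] using hT.lipschitzOnWith.dist_le_mul x hx 0 h0
  linarith [norm_sub_norm_le (T x) (T 0), hT.norm_le_of_smul_fixed h0 ht hx hfix]

theorem mul_one_sub_le_of_smul_fixed (hT : IsRakotchContractionOn T K φ)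
    {s t : ℝ} (hs : s ∈ Icc (0 : ℝ) 1) {x y : Y} (hx : x ∈ K) (hy : y ∈ K)
    (hfx : s • T x = x) (hfy : t • T y = y) :
    ‖x - y‖ * (1 - φ ‖x - y‖) ≤ |s - t| * ‖T y‖ := by
  have hTxy := hT.norm_sub_le x hx y hy
  have : ‖x - y‖ ≤ s * ‖T x - T y‖ + |s - t| * ‖T y‖ :=
    calc ‖x - y‖ = ‖s • (T x - T y) + (s - t) • T y‖ := by
          rw [smul_sub, sub_smul, hfx, hfy]; abel_nf
      _ ≤ s * ‖T x - T y‖ + |s - t| * ‖T y‖ := by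
          refine (norm_add_le _ _).trans_eq ?_
          rw [norm_smul, norm_smul, Real.norm_of_nonneg hs.1, Real.norm_eq_abs]
  nlinarith [hs.2, norm_nonneg (T x - T y)]

theorem eq_of_smul_fixed (hT : IsRakotchContractionOn T K φ) {t : ℝ}
    (ht : t ∈ Icc (0 : ℝ) 1) {x y : Y} (hx : x ∈ K) (hy : y ∈ K) (hfx : t • T x = x)
    (hfy : t • T y = y) : x = y := by
  by_contra hne
  have hpos := hT.mul_one_sub_pos (norm_pos_iff.2 (sub_ne_zero.2 hne))
  have := hT.mul_one_sub_le_of_smul_fixed ht hx hy hfx hfy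
  rw [sub_self, abs_zero, zero_mul] at this
  linarith

theorem exists_pos_norm_sub_lt_of_smul_fixed
    (hT : IsRakotchContractionOn T K φ) (h0 : (0 : Y) ∈ K) {ε : ℝ} (hε : 0 < ε) :
    ∃ δ > 0, ∀ s ∈ Icc (0 : ℝ) 1, ∀ t ∈ Icc (0 : ℝ) 1, |s - t| < δ →
      ∀ x ∈ K, ∀ y ∈ K, s • T x = x → t • T y = y → ‖x - y‖ < ε := by
  obtain ⟨M, hM, hbound⟩ := hT.exists_norm_le_of_smul_fixed h0
  refine ⟨ε * (1 - φ ε) / M, div_pos (hT.mul_one_sub_pos hε) hM,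
    fun s hs t ht hst x hx y hy hfx hfy => ?_⟩
  by_contra! hle
  have h1 := hT.mul_one_sub_le_of_smul_fixed hs hx hy hfx hfy
  have h2 := hT.mul_one_sub_le_mul_one_sub hε hle
  have h3 : |s - t| * ‖T y‖ < ε * (1 - φ ε) :=
    calc |s - t| * ‖T y‖ ≤ |s - t| * M := by gcongr; exact hbound t ht y hy hfy
      _ < ε * (1 - φ ε) := (lt_div_iff₀ hM).1 hst
  linarith

theorem isClosed_setOf_smul_fixed_inter_Icc [CompleteSpace Y]
    (hT : IsRakotchContractionOn T K φ) (hK : IsClosed K) (h0 : (0 : Y) ∈ K) :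
    IsClosed ({t : ℝ | ∃ z ∈ K, t • T z = z} ∩ Icc 0 1) := by
  refine IsSeqClosed.isClosed fun u t hu hut => ?_
  choose w hwK hwfix using fun n => (hu n).1
  have hw : CauchySeq w := by
    refine Metric.cauchySeq_iff.2 fun ε hε => ?_
    obtain ⟨δ, hδ, hclose⟩ := hT.exists_pos_norm_sub_lt_of_smul_fixed h0 hε
    obtain ⟨N, hN⟩ := Metric.cauchySeq_iff.1 hut.cauchySeq δ hδ
    refine ⟨N, fun m hm n hn => ?_⟩
    rw [dist_eq_norm]
    exact hclose _ (hu m).2 _ (hu n).2 (hN m hm n hn) _ (hwK m) _ (hwK n) (hwfix m) (hwfix n)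
  obtain ⟨z, hwz⟩ := cauchySeq_tendsto_of_complete hw
  have hzK : z ∈ K := hK.mem_of_tendsto hwz (Eventually.of_forall hwK)
  have hTw : Tendsto (fun n => T (w n)) atTop (𝓝 (T z)) :=
    (hT.lipschitzOnWith.continuousOn z hzK).tendsto.comp
      (tendsto_nhdsWithin_iff.2 ⟨hwz, Eventually.of_forall hwK⟩)
  refine ⟨⟨z, hzK, tendsto_nhds_unique (hut.smul hTw) ?_⟩,
    isClosed_Icc.mem_of_tendsto hut (Eventually.of_forall fun n => (hu n).2)⟩
  simpa only [hwfix] using hwz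

end IsRakotchContractionOn

variable [NormedSpace ℝ Y]

theorem exists_smul_fixed_mem_closedBall [CompleteSpace Y] {T : Y → Y} {x₀ : Y}
    {ρ s t : ℝ} (hT : LipschitzOnWith 1 T (closedBall x₀ ρ)) (hx₀ : t • T x₀ = x₀)
    (hs : s ∈ Ico (0 : ℝ) 1) (hst : |s - t| * ‖T x₀‖ ≤ (1 - s) * ρ) :
    ∃ z ∈ closedBall x₀ ρ, s • T z = z := by
  have hρ : 0 ≤ ρ := by nlinarith [abs_nonneg (s - t), norm_nonneg (T x₀), hs.2]
  have hmaps : MapsTo (fun y => s • T y) (closedBall x₀ ρ) (closedBall x₀ ρ) := by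
    intro y hy
    have hTy : ‖T y - T x₀‖ ≤ ρ := by
      have := hT.dist_le_mul y hy x₀ (mem_closedBall_self hρ)
      rw [NNReal.coe_one, one_mul, dist_eq_norm, dist_eq_norm] at this
      exact this.trans (by simpa [dist_eq_norm] using hy)
    rw [mem_closedBall, dist_eq_norm]
    calc ‖s • T y - x₀‖ = ‖s • (T y - T x₀) + (s - t) • T x₀‖ := by
          rw [smul_sub, sub_smul, hx₀]; abel_nf
      _ ≤ s * ‖T y - T x₀‖ + |s - t| * ‖T x₀‖ := by
          refine (norm_add_le _ _).trans_eq ?_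
          rw [norm_smul, norm_smul, Real.norm_of_nonneg hs.1, Real.norm_eq_abs]
      _ ≤ ρ := by nlinarith [hs.1]
  have hlip : LipschitzOnWith (‖s‖₊ * 1) (fun y => s • T y) (closedBall x₀ ρ) :=
    (lipschitzWith_smul s).lipschitzOnWith.comp hT (mapsTo_univ _ _)
  have hcontr : ContractingWith (‖s‖₊ * 1) (hmaps.restrict _ _ _) := by
    refine ⟨?_, hlip.mapsToRestrict hmaps⟩
    rw [mul_one, ← NNReal.coe_lt_coe, coe_nnnorm, Real.norm_of_nonneg hs.1]
    exact hs.2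
  obtain ⟨z, hz, hfix, -⟩ := hcontr.exists_fixedPoint' isClosed_closedBall.isComplete hmaps
    (mem_closedBall_self hρ) (edist_ne_top _ _)
  exact ⟨z, hz, hfix⟩

variable {G : Set Y} {T : Y → Y}

theorem mem_interior_of_smul_fixed (h0 : (0 : Y) ∈ interior G)
    (hLS : ∀ x ∈ frontier G, ∀ l : ℝ, 1 < l → T x ≠ l • x) {t : ℝ} (ht : t ∈ Ico (0 : ℝ) 1)
    {x : Y} (hx : x ∈ closure G) (hfix : t • T x = x) : x ∈ interior G := by
  rcases ht.1.eq_or_lt with rfl | htpos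
  · rwa [← hfix, zero_smul]
  by_contra hint
  refine hLS x ⟨hx, hint⟩ t⁻¹ ((one_lt_inv₀ htpos).2 ht.2) ?_
  rw [← inv_smul_smul₀ htpos.ne' (T x), hfix]

theorem setOf_smul_fixed_mem_nhdsGT [CompleteSpace Y] (hT : LipschitzOnWith 1 T (closure G))
    (h0 : (0 : Y) ∈ interior G) (hLS : ∀ x ∈ frontier G, ∀ l : ℝ, 1 < l → T x ≠ l • x)
    {t : ℝ} (ht : t ∈ {t : ℝ | ∃ z ∈ closure G, t • T z = z} ∩ Ico 0 1) :
    {t : ℝ | ∃ z ∈ closure G, t • T z = z} ∈ 𝓝[>] t := by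
  obtain ⟨⟨x₀, hx₀, hfix⟩, ht⟩ := ht
  obtain ⟨ρ, hρ, hball⟩ := nhds_basis_closedBall.mem_iff.1
    (isOpen_interior.mem_nhds (mem_interior_of_smul_fixed h0 hLS ht hx₀ hfix))
  have hballG : closedBall x₀ ρ ⊆ closure G :=
    hball.trans (interior_subset.trans subset_closure)
  have hsmall : ∀ᶠ s in 𝓝 t, |s - t| * ‖T x₀‖ < (1 - s) * ρ := by
    refine ContinuousAt.eventually_lt (by fun_prop) (by fun_prop) ?_
    rw [sub_self, abs_zero, zero_mul]
    exact mul_pos (sub_pos.2 ht.2) hρ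
  filter_upwards [Ioo_mem_nhdsGT ht.2, nhdsWithin_le_nhds hsmall] with s hs hst
  obtain ⟨z, hz, hzfix⟩ := exists_smul_fixed_mem_closedBall (hT.mono hballG) hfix
    ⟨ht.1.trans hs.1.le, hs.2⟩ hst.le
  exact ⟨z, hballG hz, hzfix⟩

end

theorem stmt_17_general {Y : Type*} [NormedAddCommGroup Y] [NormedSpace ℝ Y] [CompleteSpace Y]
    (G : Set Y) (h0 : (0:Y) ∈ interior G)
    (T : Y → Y) (φ : ℝ → ℝ)
    (hφmono : AntitoneOn φ (Set.Ici 0))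
    (hφlt : ∀ s > (0:ℝ), φ s < 1)
    (hT : ∀ x ∈ closure G, ∀ y ∈ closure G, ‖T x - T y‖ ≤ φ ‖x - y‖ * ‖x - y‖)
    (hLS : ∀ x ∈ frontier G, ∀ l : ℝ, 1 < l → T x ≠ l • x) :
    ∃ x : ℝ → Y,
      (∀ t ∈ Set.Ico (0:ℝ) 1, x t ∈ interior G ∧ t • T (x t) = x t ∧
        ∀ y ∈ closure G, t • T y = y → y = x t) ∧
      x 1 ∈ closure G ∧ T (x 1) = x 1 ∧
      (∀ y ∈ closure G, T y = y → y = x 1) ∧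
      ContinuousOn x (Set.Icc 0 1) ∧
      Tendsto x (nhdsWithin 1 (Set.Ico (0:ℝ) 1)) (𝓝 (x 1)) := by
  have hR : IsRakotchContractionOn T (closure G) φ := ⟨hφmono, hφlt, hT⟩
  have h0cl : (0 : Y) ∈ closure G := subset_closure (interior_subset h0)
  have hclosed := hR.isClosed_setOf_smul_fixed_inter_Icc isClosed_closure h0cl
  have hexists : ∀ t ∈ Icc (0 : ℝ) 1, ∃ z ∈ closure G, t • T z = z :=
    hclosed.Icc_subset_of_forall_mem_nhdsWithin ⟨0, h0cl, zero_smul _ _⟩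
      fun t ht => setOf_smul_fixed_mem_nhdsGT hR.lipschitzOnWith h0 hLS ht
  choose! x hxG hxfix using hexists
  have hcont : ContinuousOn x (Icc 0 1) := by
    refine Metric.continuousOn_iff.2 fun b hb ε hε => ?_
    obtain ⟨δ, hδ, hclose⟩ := hR.exists_pos_norm_sub_lt_of_smul_fixed h0cl hε
    refine ⟨δ, hδ, fun a ha hab => ?_⟩
    rw [dist_eq_norm]
    exact hclose a ha b hb (Real.dist_eq a b ▸ hab) _ (hxG a ha) _ (hxG b hb) (hxfix a ha)
      (hxfix b hb)
  have h1 : (1 : ℝ) ∈ Icc (0 : ℝ) 1 := right_mem_Icc.2 zero_le_one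
  refine ⟨x, fun t ht => ?_, hxG 1 h1, by simpa using hxfix 1 h1, fun y hy hfy => ?_, hcont,
    (hcont 1 h1).mono_left (nhdsWithin_mono _ Ico_subset_Icc_self)⟩
  · have htIcc := Ico_subset_Icc_self ht
    exact ⟨mem_interior_of_smul_fixed h0 hLS ht (hxG t htIcc) (hxfix t htIcc), hxfix t htIcc,
      fun y hy hfy => hR.eq_of_smul_fixed htIcc hy (hxG t htIcc) hfy (hxfix t htIcc)⟩
  · exact hR.eq_of_smul_fixed h1 hy (hxG 1 h1) (by rwa [one_smul]) (hxfix 1 h1)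

/-- Theorem 2, second part: under the Rakotch condition and the
Leray–Schauder condition, `T` has a unique fixed point `x₁ ∈ cl G`,
`t ↦ x_t` is continuous on `[0,1]`, and `x₁ = lim_{t→1⁻} x_t`. -/
theorem stmt_17 {Y : Type*} [NormedAddCommGroup Y] [NormedSpace ℝ Y] [CompleteSpace Y]
    (G : Set Y) (hGne : G.Nonempty) (h0 : (0:Y) ∈ interior G)
    (T : Y → Y) (φ : ℝ → ℝ)
    (hφmono : AntitoneOn φ (Set.Ici 0))
    (hφrange : ∀ s ≥ (0:ℝ), φ s ∈ Set.Icc (0:ℝ) 1)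
    (hφlt : ∀ s > (0:ℝ), φ s < 1)
    (hT : ∀ x ∈ closure G, ∀ y ∈ closure G, ‖T x - T y‖ ≤ φ ‖x - y‖ * ‖x - y‖)
    (hLS : ∀ x ∈ frontier G, ∀ l : ℝ, 1 < l → T x ≠ l • x) :
    ∃ x : ℝ → Y,
      (∀ t ∈ Set.Ico (0:ℝ) 1, x t ∈ interior G ∧ t • T (x t) = x t ∧
        ∀ y ∈ closure G, t • T y = y → y = x t) ∧
      x 1 ∈ closure G ∧ T (x 1) = x 1 ∧
      (∀ y ∈ closure G, T y = y → y = x 1) ∧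
      ContinuousOn x (Set.Icc 0 1) ∧
      Tendsto x (nhdsWithin 1 (Set.Ico (0:ℝ) 1)) (𝓝 (x 1)) :=
  stmt_17_general G h0 T φ hφmono hφlt hT hLS
end
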